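/- arXiv:math/0701697 — 9 statements merged into one kernel-verified Lean document; each statement's English description precedes it below -/
import Mathlib

section
/- Let n > 3, let G be a finite group with Fintype.card G = n, let g, h : Fin n → G be bijections, and let m : Fin n → Fin n → G be the Cayley matrix m i j = g i * h j. Let T be a finite set of cells in Fin n × Fin n with |T| ≤ n - 1. If N : Fin n → Fin n → G satisfies the quadrangle criterion and N i j = m i j for every cell (i, j) ∉ T, then N = m. (In other words, every Cayley matrix of order n > 3 with at most n - 1 holes is uniquely reconstructable by the quadrangle criterion.) -/
/-- A matrix `N` satisfies the quadrangle criterion. -/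
def QuadrangleCriterion {n : ℕ} {G : Type*} (N : Fin n → Fin n → G) : Prop :=
  ∀ i₁ i₂ j₁ j₂ i₁' i₂' j₁' j₂' : Fin n,
    i₁ ≠ i₂ → j₁ ≠ j₂ → i₁' ≠ i₂' → j₁' ≠ j₂' →
    N i₁ j₁ = N i₁' j₁' → N i₂ j₁ = N i₂' j₁' → N i₁ j₂ = N i₁' j₂' →
    N i₂ j₂ = N i₂' j₂'

namespace CayleyRecon

open Finset Function

set_option linter.unusedSectionVars false

variable {n : ℕ} {G : Type*} [Group G] [Fintype G]

lemma exists_not_mem_of_card_lt {α : Type*} [Fintype α] [DecidableEq α]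
    (s : Finset α) (hs : s.card < Fintype.card α) : ∃ x, x ∉ s := by
  by_contra hc
  push_neg at hc
  have h1 : (univ : Finset α) ⊆ s := fun x _ => hc x
  have := Finset.card_le_card h1
  rw [Finset.card_univ] at this
  omega

section maps

variable (g h : Fin n → G)

/-- Row translation by `a`. -/
noncomputable def sig (hg : Bijective g) (a : G) : Fin n ≃ Fin n :=
  (Equiv.ofBijective g hg).trans ((Equiv.mulRight a).trans (Equiv.ofBijective g hg).symm)

/-- Column translation by `a`. -/
noncomputable def tau (hh : Bijective h) (a : G) : Fin n ≃ Fin n :=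
  (Equiv.ofBijective h hh).trans ((Equiv.mulLeft a⁻¹).trans (Equiv.ofBijective h hh).symm)

variable {g h}

lemma sig_spec (hg : Bijective g) (a : G) (p : Fin n) :
    g (sig g hg a p) = g p * a := by
  show (Equiv.ofBijective g hg) ((Equiv.ofBijective g hg).symm (g p * a)) = g p * a
  exact (Equiv.ofBijective g hg).apply_symm_apply _

lemma tau_spec (hh : Bijective h) (a : G) (q : Fin n) :
    h (tau h hh a q) = a⁻¹ * h q := by
  show (Equiv.ofBijective h hh) ((Equiv.ofBijective h hh).symm (a⁻¹ * h q)) = a⁻¹ * h q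
  exact (Equiv.ofBijective h hh).apply_symm_apply _

lemma sig_one (hg : Bijective g) (p : Fin n) : sig g hg 1 p = p :=
  hg.1 (by rw [sig_spec hg, mul_one])

lemma tau_one (hh : Bijective h) (q : Fin n) : tau h hh 1 q = q :=
  hh.1 (by rw [tau_spec hh, inv_one, one_mul])

lemma sig_ne_self (hg : Bijective g) {a : G} (ha : a ≠ 1) (p : Fin n) :
    sig g hg a p ≠ p := by
  intro he
  apply ha
  have := sig_spec hg a p
  rw [he] at this
  exact (mul_eq_left.mp this.symm)

lemma tau_ne_self (hh : Bijective h) {a : G} (ha : a ≠ 1) (q : Fin n) :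
    tau h hh a q ≠ q := by
  intro he
  apply ha
  have := tau_spec hh a q
  rw [he] at this
  have h2 : a⁻¹ = 1 := mul_eq_right.mp this.symm
  simpa using congrArg (·⁻¹) h2

lemma sig_left_inj (hg : Bijective g) {a b : G} (p : Fin n)
    (hab : sig g hg a p = sig g hg b p) : a = b := by
  have h1 := sig_spec hg a p
  have h2 := sig_spec hg b p
  rw [hab, h2] at h1
  exact (mul_left_cancel h1).symm

lemma tau_left_inj (hh : Bijective h) {a b : G} (q : Fin n)
    (hab : tau h hh a q = tau h hh b q) : a = b := by
  have h1 := tau_spec hh a q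
  have h2 := tau_spec hh b q
  rw [hab, h2] at h1
  have h3 := mul_right_cancel h1
  simpa using congrArg (·⁻¹) h3.symm

lemma sig_bijective_left (hg : Bijective g) (hcard : Fintype.card G = n) (p : Fin n) :
    Bijective (fun a : G => sig g hg a p) := by
  rw [Fintype.bijective_iff_injective_and_card]
  constructor
  · intro a b hab
    exact sig_left_inj hg p hab
  · rw [hcard, Fintype.card_fin]

lemma tau_bijective_left (hh : Bijective h) (hcard : Fintype.card G = n) (q : Fin n) :
    Bijective (fun a : G => tau h hh a q) := by
  rw [Fintype.bijective_iff_injective_and_card]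
  constructor
  · intro a b hab
    exact tau_left_inj hh q hab
  · rw [hcard, Fintype.card_fin]

end maps

section counts

/-- number of holes in row `r`. -/
def rho (T : Finset (Fin n × Fin n)) (r : Fin n) : ℕ :=
  (T.filter fun c => c.1 = r).card

/-- number of holes in column `c`. -/
def kap (T : Finset (Fin n × Fin n)) (c : Fin n) : ℕ :=
  (T.filter fun x => x.2 = c).card

lemma rho_pos (T : Finset (Fin n × Fin n)) {i j : Fin n} (hij : (i, j) ∈ T) :
    1 ≤ rho T i :=
  Finset.card_pos.mpr ⟨(i, j), Finset.mem_filter.mpr ⟨hij, rfl⟩⟩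

lemma kap_pos (T : Finset (Fin n × Fin n)) {i j : Fin n} (hij : (i, j) ∈ T) :
    1 ≤ kap T j :=
  Finset.card_pos.mpr ⟨(i, j), Finset.mem_filter.mpr ⟨hij, rfl⟩⟩

lemma sum_rho (T : Finset (Fin n × Fin n)) : ∑ r, rho T r = T.card :=
  (Finset.card_eq_sum_card_fiberwise (fun (x : Fin n × Fin n) (_ : x ∈ T) =>
    Finset.mem_univ x.1)).symm

lemma sum_kap (T : Finset (Fin n × Fin n)) : ∑ c, kap T c = T.card :=
  (Finset.card_eq_sum_card_fiberwise (fun (x : Fin n × Fin n) (_ : x ∈ T) =>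
    Finset.mem_univ x.2)).symm

lemma cross_bound (T : Finset (Fin n × Fin n)) (p q : Fin n) :
    (T.filter fun c => ¬(c.1 = p ∨ c.2 = q)).card + rho T p + kap T q ≤ T.card + 1 := by
  classical
  have hsplit := Finset.card_filter_add_card_filter_not
    (s := T) (p := fun c : Fin n × Fin n => c.1 = p ∨ c.2 = q)
  have hor : T.filter (fun c : Fin n × Fin n => c.1 = p ∨ c.2 = q)
      = (T.filter fun c => c.1 = p) ∪ (T.filter fun c => c.2 = q) :=
    Finset.filter_or _ _ _
  have hint : (T.filter fun c : Fin n × Fin n => c.1 = p) ∩ (T.filter fun c => c.2 = q)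
      ⊆ {(p, q)} := by
    intro c hc
    simp only [Finset.mem_inter, Finset.mem_filter] at hc
    simp only [Finset.mem_singleton]
    exact Prod.ext hc.1.2 hc.2.2
  have hintc : ((T.filter fun c : Fin n × Fin n => c.1 = p) ∩
      (T.filter fun c => c.2 = q)).card ≤ 1 := by
    simpa using Finset.card_le_card hint
  have hcui := Finset.card_union_add_card_inter
    (T.filter fun c : Fin n × Fin n => c.1 = p) (T.filter fun c => c.2 = q)
  rw [hor] at hsplit
  unfold rho kap
  omega

end counts


section main

variable {g h : Fin n → G}

lemma main_witness (hg : Bijective g) (hh : Bijective h)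
    (hcard : Fintype.card G = n) (hn : 4 ≤ n)
    (T : Finset (Fin n × Fin n)) (hT : T.card ≤ n - 1)
    (i j : Fin n) (hij : (i, j) ∈ T) (a : G) (ha : a ≠ 1)
    (hphi : (sig g hg a i, tau h hh a j) ∉ T)
    (hsf : rho T i + kap T j + rho T (sig g hg a i) + kap T (tau h hh a j) ≤ n - 1) :
    ∃ i₁ j₁, i₁ ≠ i ∧ j₁ ≠ j ∧ (i, j₁) ∉ T ∧ (i₁, j) ∉ T ∧ (i₁, j₁) ∉ T ∧
      (sig g hg a i, tau h hh a j₁) ∉ T ∧ (sig g hg a i₁, tau h hh a j) ∉ T ∧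
      (sig g hg a i₁, tau h hh a j₁) ∉ T := by
  classical
  set σ := sig g hg a with hσ
  set τ := tau h hh a with hτ
  set S : Finset (Fin n × Fin n) := (univ.erase i) ×ˢ (univ.erase j) with hS
  have hScard : S.card = (n - 1) * (n - 1) := by
    rw [hS, card_product, card_erase_of_mem (mem_univ _), card_erase_of_mem (mem_univ _),
      card_univ, Fintype.card_fin]
  -- the six bad sets
  set B1 := S.filter (fun p => (i, p.2) ∈ T) with hB1
  set B2 := S.filter (fun p => (p.1, j) ∈ T) with hB2
  set B3 := S.filter (fun p => p ∈ T) with hB3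
  set B4 := S.filter (fun p => (σ i, τ p.2) ∈ T) with hB4
  set B5 := S.filter (fun p => (σ p.1, τ j) ∈ T) with hB5
  set B6 := S.filter (fun p => (σ p.1, τ p.2) ∈ T) with hB6
  -- bound B1
  set A1 := ((univ.erase j).filter fun q => (i, q) ∈ T).card with hA1def
  have hB1card : B1.card ≤ (n - 1) * A1 := by
    have hsub : B1 ⊆ (univ.erase i) ×ˢ ((univ.erase j).filter fun q => (i, q) ∈ T) := by
      intro p hp
      rw [hB1, mem_filter, hS, mem_product] at hp
      rw [mem_product, mem_filter]
      exact ⟨hp.1.1, hp.1.2, hp.2⟩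
    have := card_le_card hsub
    rwa [card_product, card_erase_of_mem (mem_univ _), card_univ, Fintype.card_fin] at this
  have hA1 : A1 + 1 ≤ rho T i := by
    have hmem : (i, j) ∈ T.filter fun c => c.1 = i := mem_filter.mpr ⟨hij, rfl⟩
    have hle : A1 ≤ ((T.filter fun c => c.1 = i).erase (i, j)).card := by
      apply card_le_card_of_injOn (fun q => (i, q))
      · intro q hq
        rw [mem_coe, mem_filter, mem_erase] at hq
        rw [mem_coe, mem_erase, mem_filter]
        refine ⟨?_, hq.2, rfl⟩
        intro he
        exact hq.1.1 (congrArg Prod.snd he)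
      · intro q1 _ q2 _ he
        exact congrArg Prod.snd he
    rw [card_erase_of_mem hmem] at hle
    have := rho_pos T hij
    unfold rho at *
    omega
  -- bound B2
  set A2 := ((univ.erase i).filter fun p => (p, j) ∈ T).card with hA2def
  have hB2card : B2.card ≤ (n - 1) * A2 := by
    rw [Nat.mul_comm]
    have hsub : B2 ⊆ ((univ.erase i).filter fun p => (p, j) ∈ T) ×ˢ (univ.erase j) := by
      intro p hp
      rw [hB2, mem_filter, hS, mem_product] at hp
      rw [mem_product, mem_filter]
      exact ⟨⟨hp.1.1, hp.2⟩, hp.1.2⟩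
    have := card_le_card hsub
    rwa [card_product, card_erase_of_mem (mem_univ _), card_univ, Fintype.card_fin] at this
  have hA2 : A2 + 1 ≤ kap T j := by
    have hmem : (i, j) ∈ T.filter fun c => c.2 = j := mem_filter.mpr ⟨hij, rfl⟩
    have hle : A2 ≤ ((T.filter fun c => c.2 = j).erase (i, j)).card := by
      apply card_le_card_of_injOn (fun p => (p, j))
      · intro p hp
        rw [mem_coe, mem_filter, mem_erase] at hp
        rw [mem_coe, mem_erase, mem_filter]
        refine ⟨?_, hp.2, rfl⟩
        intro he
        exact hp.1.1 (congrArg Prod.fst he)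
      · intro p1 _ p2 _ he
        exact congrArg Prod.fst he
    rw [card_erase_of_mem hmem] at hle
    have := kap_pos T hij
    unfold kap at *
    omega
  -- bound B3
  set A3 := (T.filter fun c => ¬(c.1 = i ∨ c.2 = j)).card with hA3def
  have hB3card : B3.card ≤ A3 := by
    apply card_le_card
    intro p hp
    rw [hB3, mem_filter, hS, mem_product, mem_erase, mem_erase] at hp
    rw [mem_filter]
    refine ⟨hp.2, ?_⟩
    push_neg
    exact ⟨hp.1.1.1, hp.1.2.1⟩
  have hA3 : A3 + rho T i + kap T j ≤ T.card + 1 := cross_bound T i j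
  -- bound B4
  set A4 := ((univ.erase j).filter fun q => (σ i, τ q) ∈ T).card with hA4def
  have hB4card : B4.card ≤ (n - 1) * A4 := by
    have hsub : B4 ⊆ (univ.erase i) ×ˢ ((univ.erase j).filter fun q => (σ i, τ q) ∈ T) := by
      intro p hp
      rw [hB4, mem_filter, hS, mem_product] at hp
      rw [mem_product, mem_filter]
      exact ⟨hp.1.1, hp.1.2, hp.2⟩
    have := card_le_card hsub
    rwa [card_product, card_erase_of_mem (mem_univ _), card_univ, Fintype.card_fin] at this
  have hA4 : A4 ≤ rho T (σ i) := by
    apply card_le_card_of_injOn (fun q => (σ i, τ q))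
    · intro q hq
      rw [mem_coe, mem_filter] at hq
      exact mem_filter.mpr ⟨hq.2, rfl⟩
    · intro q1 _ q2 _ he
      exact τ.injective (congrArg Prod.snd he)
  -- bound B5
  set A5 := ((univ.erase i).filter fun p => (σ p, τ j) ∈ T).card with hA5def
  have hB5card : B5.card ≤ (n - 1) * A5 := by
    rw [Nat.mul_comm]
    have hsub : B5 ⊆ ((univ.erase i).filter fun p => (σ p, τ j) ∈ T) ×ˢ (univ.erase j) := by
      intro p hp
      rw [hB5, mem_filter, hS, mem_product] at hp
      rw [mem_product, mem_filter]
      exact ⟨⟨hp.1.1, hp.2⟩, hp.1.2⟩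
    have := card_le_card hsub
    rwa [card_product, card_erase_of_mem (mem_univ _), card_univ, Fintype.card_fin] at this
  have hA5 : A5 ≤ kap T (τ j) := by
    apply card_le_card_of_injOn (fun p => (σ p, τ j))
    · intro p hp
      rw [mem_coe, mem_filter] at hp
      exact mem_filter.mpr ⟨hp.2, rfl⟩
    · intro p1 _ p2 _ he
      exact σ.injective (congrArg Prod.fst he)
  -- bound B6
  have hB6card : B6.card ≤ T.card := by
    apply card_le_card_of_injOn (fun p => (σ p.1, τ p.2))
    · intro p hp
      rw [hB6, mem_coe, mem_filter] at hp
      exact hp.2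
    · intro p1 _ p2 _ he
      exact Prod.ext (σ.injective (congrArg Prod.fst he)) (τ.injective (congrArg Prod.snd he))
  -- assemble
  set Bad := S.filter (fun p => (i, p.2) ∈ T ∨ (p.1, j) ∈ T ∨ p ∈ T ∨ (σ i, τ p.2) ∈ T ∨
      (σ p.1, τ j) ∈ T ∨ (σ p.1, τ p.2) ∈ T) with hBad
  have hBadsub : Bad ⊆ B1 ∪ B2 ∪ B3 ∪ B4 ∪ B5 ∪ B6 := by
    intro p hp
    rw [hBad, mem_filter] at hp
    simp only [mem_union, hB1, hB2, hB3, hB4, hB5, hB6, mem_filter]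
    rcases hp.2 with h1 | h2 | h3 | h4 | h5 | h6
    · exact Or.inl (Or.inl (Or.inl (Or.inl (Or.inl ⟨hp.1, h1⟩))))
    · exact Or.inl (Or.inl (Or.inl (Or.inl (Or.inr ⟨hp.1, h2⟩))))
    · exact Or.inl (Or.inl (Or.inl (Or.inr ⟨hp.1, h3⟩)))
    · exact Or.inl (Or.inl (Or.inr ⟨hp.1, h4⟩))
    · exact Or.inl (Or.inr ⟨hp.1, h5⟩)
    · exact Or.inr ⟨hp.1, h6⟩
  have hBadcard : Bad.card ≤ B1.card + B2.card + B3.card + B4.card + B5.card + B6.card := by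
    calc Bad.card ≤ (B1 ∪ B2 ∪ B3 ∪ B4 ∪ B5 ∪ B6).card := card_le_card hBadsub
    _ ≤ (B1 ∪ B2 ∪ B3 ∪ B4 ∪ B5).card + B6.card := card_union_le _ _
    _ ≤ (B1 ∪ B2 ∪ B3 ∪ B4).card + B5.card + B6.card := by
        have := card_union_le (B1 ∪ B2 ∪ B3 ∪ B4) B5; omega
    _ ≤ (B1 ∪ B2 ∪ B3).card + B4.card + B5.card + B6.card := by
        have := card_union_le (B1 ∪ B2 ∪ B3) B4; omega
    _ ≤ (B1 ∪ B2).card + B3.card + B4.card + B5.card + B6.card := by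
        have := card_union_le (B1 ∪ B2) B3; omega
    _ ≤ B1.card + B2.card + B3.card + B4.card + B5.card + B6.card := by
        have := card_union_le B1 B2; omega
  -- arithmetic
  have hlt : Bad.card < S.card := by
    rw [hScard]
    have hX : A1 + A2 + A4 + A5 + 2 ≤ n - 1 := by omega
    have hkey : (n-1) * A1 + (n-1) * A2 + (n-1) * A4 + (n-1) * A5 + 2 * (n-1)
        ≤ (n-1) * (n-1) := by
      calc (n-1) * A1 + (n-1) * A2 + (n-1) * A4 + (n-1) * A5 + 2 * (n-1)
          = (n-1) * (A1 + A2 + A4 + A5 + 2) := by ring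
        _ ≤ (n-1) * (n-1) := Nat.mul_le_mul_left _ hX
    have hrki : 1 ≤ rho T i := rho_pos T hij
    have hrkj : 1 ≤ kap T j := kap_pos T hij
    omega
  -- extract a good pair
  have hgood : ∃ p ∈ S, p ∉ Bad := by
    by_contra hc
    push_neg at hc
    have : S ⊆ Bad := fun p hp => hc p hp
    have := card_le_card this
    omega
  obtain ⟨p, hpS, hpBad⟩ := hgood
  have hpS' := hpS
  simp only [hS, mem_product, mem_erase] at hpS'
  have hp1 : p.1 ≠ i := hpS'.1.1
  have hp2 : p.2 ≠ j := hpS'.2.1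
  have hnotor : ¬((i, p.2) ∈ T ∨ (p.1, j) ∈ T ∨ p ∈ T ∨ (σ i, τ p.2) ∈ T ∨
      (σ p.1, τ j) ∈ T ∨ (σ p.1, τ p.2) ∈ T) := by
    intro hor
    exact hpBad (by rw [hBad, mem_filter]; exact ⟨hpS, hor⟩)
  push_neg at hnotor
  obtain ⟨c1, c2, c3, c4, c5, c6⟩ := hnotor
  refine ⟨p.1, p.2, hp1, hp2, c1, c2, ?_, c4, c5, c6⟩
  intro hmem
  exact c3 (by simpa using hmem)

end main

section translates

variable [DecidableEq G] {g h : Fin n → G}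

lemma card_erase_one (hcard : Fintype.card G = n) :
    ((univ : Finset G).erase 1).card = n - 1 := by
  rw [card_erase_of_mem (mem_univ _), card_univ, hcard]

lemma sum_rho_erase (hg : Bijective g) (hcard : Fintype.card G = n)
    (T : Finset (Fin n × Fin n)) (i : Fin n) :
    rho T i + ∑ a ∈ (univ : Finset G).erase 1, rho T (sig g hg a i) = T.card := by
  have h1 : ∑ a : G, rho T (sig g hg a i) = ∑ r, rho T r :=
    Fintype.sum_bijective _ (sig_bijective_left hg hcard i) _ _ (fun a => rfl)
  have h2 := Finset.add_sum_erase (univ : Finset G)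
    (fun a : G => rho T (sig g hg a i)) (mem_univ 1)
  simp only [sig_one hg] at h2
  rw [h2, h1, sum_rho]

lemma sum_kap_erase (hh : Bijective h) (hcard : Fintype.card G = n)
    (T : Finset (Fin n × Fin n)) (j : Fin n) :
    kap T j + ∑ a ∈ (univ : Finset G).erase 1, kap T (tau h hh a j) = T.card := by
  have h1 : ∑ a : G, kap T (tau h hh a j) = ∑ c, kap T c :=
    Fintype.sum_bijective _ (tau_bijective_left hh hcard j) _ _ (fun a => rfl)
  have h2 := Finset.add_sum_erase (univ : Finset G)
    (fun a : G => kap T (tau h hh a j)) (mem_univ 1)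
  simp only [tau_one hh] at h2
  rw [h2, h1, sum_kap]

/-- There is a translate `a ≠ 1` whose target cell is full and whose
row/column hole count is at most 1. -/
lemma exists_translate (hg : Bijective g) (hh : Bijective h)
    (hcard : Fintype.card G = n) (hn : 4 ≤ n)
    (T : Finset (Fin n × Fin n)) (hT : T.card ≤ n - 1)
    (i j : Fin n) (hij : (i, j) ∈ T) :
    ∃ a : G, a ≠ 1 ∧ (sig g hg a i, tau h hh a j) ∉ T ∧
      rho T (sig g hg a i) + kap T (tau h hh a j) ≤ 1 := by
  classical
  by_contra hcon
  push_neg at hcon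
  have key : ∀ a ∈ (univ : Finset G).erase 1,
      2 ≤ rho T (sig g hg a i) + kap T (tau h hh a j) := by
    intro a haa
    rw [mem_erase] at haa
    by_cases hc : (sig g hg a i, tau h hh a j) ∈ T
    · have h1 : 1 ≤ rho T (sig g hg a i) := rho_pos T hc
      have h2 : 1 ≤ kap T (tau h hh a j) := kap_pos T hc
      omega
    · have := hcon a haa.1 hc
      omega
  have hsum := Finset.card_nsmul_le_sum ((univ : Finset G).erase 1) _ 2 key
  rw [smul_eq_mul] at hsum
  have hdist : ∑ a ∈ (univ : Finset G).erase 1,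
      (rho T (sig g hg a i) + kap T (tau h hh a j))
      = (∑ a ∈ (univ : Finset G).erase 1, rho T (sig g hg a i))
      + ∑ a ∈ (univ : Finset G).erase 1, kap T (tau h hh a j) :=
    Finset.sum_add_distrib
  have h1 := sum_rho_erase hg hcard T i
  have h2 := sum_kap_erase hh hcard T j
  have h3 := card_erase_one (G := G) hcard
  have h4 : 1 ≤ rho T i := rho_pos T hij
  have h5 : 1 ≤ kap T j := kap_pos T hij
  rw [h3, hdist] at hsum
  omega

/-- When holes occupy at most 2 rows and 2 columns there is a translate with
completely clean row and column. -/
lemma exists_translate_zero (hg : Bijective g) (hh : Bijective h)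
    (hcard : Fintype.card G = n) (hn : 4 ≤ n)
    (T : Finset (Fin n × Fin n))
    (hR : (T.image Prod.fst).card ≤ 2) (hC : (T.image Prod.snd).card ≤ 2)
    (i j : Fin n) (hij : (i, j) ∈ T) :
    ∃ a : G, a ≠ 1 ∧ (sig g hg a i, tau h hh a j) ∉ T ∧
      rho T (sig g hg a i) = 0 ∧ kap T (tau h hh a j) = 0 := by
  classical
  set Bad := ((univ : Finset G).erase 1).filter
    (fun a => 0 < rho T (sig g hg a i) ∨ 0 < kap T (tau h hh a j)) with hBad
  have hb1 : (((univ : Finset G).erase 1).filter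
      (fun a => 0 < rho T (sig g hg a i))).card ≤ ((T.image Prod.fst).erase i).card := by
    apply card_le_card_of_injOn (fun a => sig g hg a i)
    · intro a haa
      rw [mem_coe, mem_filter, mem_erase] at haa
      simp only [mem_coe, mem_erase]
      constructor
      · exact sig_ne_self hg haa.1.1 i
      · have := haa.2
        unfold rho at this
        rw [Finset.card_pos] at this
        obtain ⟨c, hc⟩ := this
        rw [mem_filter] at hc
        rw [← hc.2]
        exact mem_image_of_mem _ hc.1
    · intro a _ b _ he
      exact sig_left_inj hg i he
  have hb2 : (((univ : Finset G).erase 1).filter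
      (fun a => 0 < kap T (tau h hh a j))).card ≤ ((T.image Prod.snd).erase j).card := by
    apply card_le_card_of_injOn (fun a => tau h hh a j)
    · intro a haa
      rw [mem_coe, mem_filter, mem_erase] at haa
      simp only [mem_coe, mem_erase]
      constructor
      · exact tau_ne_self hh haa.1.1 j
      · have := haa.2
        unfold kap at this
        rw [Finset.card_pos] at this
        obtain ⟨c, hc⟩ := this
        rw [mem_filter] at hc
        rw [← hc.2]
        exact mem_image_of_mem _ hc.1
    · intro a _ b _ he
      exact tau_left_inj hh j he
  have hsplit : Bad = (((univ : Finset G).erase 1).filter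
      (fun a => 0 < rho T (sig g hg a i))) ∪ (((univ : Finset G).erase 1).filter
      (fun a => 0 < kap T (tau h hh a j))) := Finset.filter_or _ _ _
  have hBadcard : Bad.card ≤ 2 := by
    rw [hsplit]
    have := card_union_le (((univ : Finset G).erase 1).filter
      (fun a => 0 < rho T (sig g hg a i))) (((univ : Finset G).erase 1).filter
      (fun a => 0 < kap T (tau h hh a j)))
    have e1 : ((T.image Prod.fst).erase i).card = (T.image Prod.fst).card - 1 :=
      card_erase_of_mem (mem_image_of_mem Prod.fst hij)
    have e2 : ((T.image Prod.snd).erase j).card = (T.image Prod.snd).card - 1 :=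
      card_erase_of_mem (mem_image_of_mem Prod.snd hij)
    have p1 : 0 < (T.image Prod.fst).card := card_pos.mpr ⟨i, mem_image_of_mem Prod.fst hij⟩
    omega
  have hex : ∃ a ∈ (univ : Finset G).erase 1, a ∉ Bad := by
    by_contra hc
    push_neg at hc
    have hsub : (univ : Finset G).erase 1 ⊆ Bad := fun a haa => hc a haa
    have := card_le_card hsub
    have h3 := card_erase_one (G := G) hcard
    omega
  obtain ⟨a, haa, hab⟩ := hex
  rw [mem_erase] at haa
  have hnot : ¬(0 < rho T (sig g hg a i) ∨ 0 < kap T (tau h hh a j)) := by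
    intro hor
    exact hab (by rw [hBad, mem_filter]; exact ⟨mem_erase.mpr ⟨haa.1, mem_univ _⟩, hor⟩)
  push_neg at hnot
  refine ⟨a, haa.1, ?_, by omega, by omega⟩
  intro hmem
  exact absurd (rho_pos T hmem) (by omega)

end translates

section rowcol

variable {g h : Fin n → G}

lemma exists_full_in_row (hn : 4 ≤ n) (T : Finset (Fin n × Fin n))
    (hT : T.card ≤ n - 1) (i : Fin n) : ∃ q, (i, q) ∉ T := by
  by_contra hc
  push_neg at hc
  have hsub : univ.image (fun q : Fin n => (i, q)) ⊆ T := by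
    intro c hcmem
    rw [mem_image] at hcmem
    obtain ⟨q, _, rfl⟩ := hcmem
    exact hc q
  have hcardim : (univ.image (fun q : Fin n => (i, q))).card = n := by
    rw [Finset.card_image_of_injective _ (fun a b hab => congrArg Prod.snd hab),
      card_univ, Fintype.card_fin]
  have := card_le_card hsub
  omega

lemma exists_full_in_col (hn : 4 ≤ n) (T : Finset (Fin n × Fin n))
    (hT : T.card ≤ n - 1) (j : Fin n) : ∃ p, (p, j) ∉ T := by
  by_contra hc
  push_neg at hc
  have hsub : univ.image (fun p : Fin n => (p, j)) ⊆ T := by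
    intro c hcmem
    rw [mem_image] at hcmem
    obtain ⟨p, _, rfl⟩ := hcmem
    exact hc p
  have hcardim : (univ.image (fun p : Fin n => (p, j))).card = n := by
    rw [Finset.card_image_of_injective _ (fun a b hab => congrArg Prod.fst hab),
      card_univ, Fintype.card_fin]
  have := card_le_card hsub
  omega

lemma exists_a_ne_one (hcard : Fintype.card G = n) (hn : 4 ≤ n) : ∃ a : G, a ≠ 1 := by
  have : 1 < Fintype.card G := by omega
  exact Fintype.exists_ne_of_one_lt_card this 1

lemma avoid_two (hn : 4 ≤ n) (x y : Fin n) : ∃ z : Fin n, z ≠ x ∧ z ≠ y := by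
  have h1 : ({x, y} : Finset (Fin n)).card ≤ 2 := by
    have := Finset.card_insert_le x ({y} : Finset (Fin n))
    simpa using this
  have hcard : ({x, y} : Finset (Fin n)).card < Fintype.card (Fin n) := by
    rw [Fintype.card_fin]; omega
  obtain ⟨z, hz⟩ := exists_not_mem_of_card_lt _ hcard
  rw [mem_insert, mem_singleton] at hz
  push_neg at hz
  exact ⟨z, hz.1, hz.2⟩

lemma row_case (hg : Bijective g) (hh : Bijective h)
    (hcard : Fintype.card G = n) (hn : 4 ≤ n)
    (T : Finset (Fin n × Fin n)) (hT : T.card ≤ n - 1) (hne : T.Nonempty)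
    (i₀ : Fin n) (hrow : ∀ p ∈ T, p.1 = i₀) :
    ∃ i j, ∃ a : G, ∃ i₁ j₁, (i, j) ∈ T ∧ a ≠ 1 ∧ i₁ ≠ i ∧ j₁ ≠ j ∧
      (i, j₁) ∉ T ∧ (i₁, j) ∉ T ∧ (i₁, j₁) ∉ T ∧
      (sig g hg a i, tau h hh a j) ∉ T ∧ (sig g hg a i, tau h hh a j₁) ∉ T ∧
      (sig g hg a i₁, tau h hh a j) ∉ T ∧ (sig g hg a i₁, tau h hh a j₁) ∉ T := by
  obtain ⟨⟨i, j⟩, hij⟩ := hne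
  have hi : i = i₀ := hrow _ hij
  subst hi
  have notrow : ∀ p q, p ≠ i → (p, q) ∉ T := by
    intro p q hp hmem
    exact hp (hrow _ hmem)
  obtain ⟨j₁, hj₁⟩ := exists_full_in_row hn T hT i
  obtain ⟨a, ha⟩ := exists_a_ne_one (G := G) hcard hn
  obtain ⟨i₁, hi₁, hi₁'⟩ := avoid_two hn i ((sig g hg a).symm i)
  have hsig : sig g hg a i ≠ i := sig_ne_self hg ha i
  have hsig₁ : sig g hg a i₁ ≠ i := by
    intro he
    apply hi₁'
    rw [← he, Equiv.symm_apply_apply]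
  have hjj : j₁ ≠ j := by
    intro he
    rw [he] at hj₁
    exact hj₁ hij
  exact ⟨i, j, a, i₁, j₁, hij, ha, hi₁, hjj, hj₁, notrow _ _ hi₁, notrow _ _ hi₁,
    notrow _ _ hsig, notrow _ _ hsig, notrow _ _ hsig₁, notrow _ _ hsig₁⟩

lemma col_case (hg : Bijective g) (hh : Bijective h)
    (hcard : Fintype.card G = n) (hn : 4 ≤ n)
    (T : Finset (Fin n × Fin n)) (hT : T.card ≤ n - 1) (hne : T.Nonempty)
    (j₀ : Fin n) (hcol : ∀ p ∈ T, p.2 = j₀) :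
    ∃ i j, ∃ a : G, ∃ i₁ j₁, (i, j) ∈ T ∧ a ≠ 1 ∧ i₁ ≠ i ∧ j₁ ≠ j ∧
      (i, j₁) ∉ T ∧ (i₁, j) ∉ T ∧ (i₁, j₁) ∉ T ∧
      (sig g hg a i, tau h hh a j) ∉ T ∧ (sig g hg a i, tau h hh a j₁) ∉ T ∧
      (sig g hg a i₁, tau h hh a j) ∉ T ∧ (sig g hg a i₁, tau h hh a j₁) ∉ T := by
  obtain ⟨⟨i, j⟩, hij⟩ := hne
  have hj : j = j₀ := hcol _ hij
  subst hj
  have notcol : ∀ p q, q ≠ j → (p, q) ∉ T := by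
    intro p q hq hmem
    exact hq (hcol _ hmem)
  obtain ⟨i₁, hi₁mem⟩ := exists_full_in_col hn T hT j
  obtain ⟨a, ha⟩ := exists_a_ne_one (G := G) hcard hn
  obtain ⟨j₁, hj₁, hj₁'⟩ := avoid_two hn j ((tau h hh a).symm j)
  have htau : tau h hh a j ≠ j := tau_ne_self hh ha j
  have htau₁ : tau h hh a j₁ ≠ j := by
    intro he
    apply hj₁'
    rw [← he, Equiv.symm_apply_apply]
  have hii : i₁ ≠ i := by
    intro he
    rw [he] at hi₁mem
    exact hi₁mem hij
  exact ⟨i, j, a, i₁, j₁, hij, ha, hii, hj₁, notcol _ _ hj₁, hi₁mem, notcol _ _ hj₁,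
    notcol _ _ htau, notcol _ _ htau₁, notcol _ _ htau, notcol _ _ htau₁⟩

end rowcol

section fillable

variable [DecidableEq G] {g h : Fin n → G}

lemma exists_fillable (hg : Bijective g) (hh : Bijective h)
    (hcard : Fintype.card G = n) (hn : 4 ≤ n)
    (T : Finset (Fin n × Fin n)) (hT : T.card ≤ n - 1) (hne : T.Nonempty) :
    ∃ i j, ∃ a : G, ∃ i₁ j₁, (i, j) ∈ T ∧ a ≠ 1 ∧ i₁ ≠ i ∧ j₁ ≠ j ∧
      (i, j₁) ∉ T ∧ (i₁, j) ∉ T ∧ (i₁, j₁) ∉ T ∧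
      (sig g hg a i, tau h hh a j) ∉ T ∧ (sig g hg a i, tau h hh a j₁) ∉ T ∧
      (sig g hg a i₁, tau h hh a j) ∉ T ∧ (sig g hg a i₁, tau h hh a j₁) ∉ T := by
  classical
  by_cases hgood : ∃ c ∈ T, rho T c.1 + kap T c.2 ≤ n - 2
  · obtain ⟨c, hc, hcs⟩ := hgood
    have hij : (c.1, c.2) ∈ T := by simpa using hc
    obtain ⟨a, ha, hphi, hf⟩ := exists_translate hg hh hcard hn T hT c.1 c.2 hij
    have hsf : rho T c.1 + kap T c.2 + rho T (sig g hg a c.1) + kap T (tau h hh a c.2)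
        ≤ n - 1 := by omega
    obtain ⟨i₁, j₁, w1, w2, w3, w4, w5, w6, w7, w8⟩ :=
      main_witness hg hh hcard hn T hT c.1 c.2 hij a ha hphi hsf
    exact ⟨c.1, c.2, a, i₁, j₁, hij, ha, w1, w2, w3, w4, w5, hphi, w6, w7, w8⟩
  · push_neg at hgood
    have hbig : ∀ c ∈ T, n - 1 ≤ rho T c.1 + kap T c.2 := by
      intro c hc
      have := hgood c hc
      omega
    by_cases hrow : ∃ r, ∀ p ∈ T, p.1 = r
    · obtain ⟨r, hr⟩ := hrow
      exact row_case hg hh hcard hn T hT hne r hr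
    by_cases hcol : ∃ cc, ∀ p ∈ T, p.2 = cc
    · obtain ⟨cc, hc⟩ := hcol
      exact col_case hg hh hcard hn T hT hne cc hc
    push_neg at hrow hcol
    -- every hole's row has at most 2 holes
    have hrho2 : ∀ c ∈ T, rho T c.1 ≤ 2 := by
      intro c hc
      obtain ⟨d, hd, hdne⟩ := hrow c.1
      have hcb := cross_bound T d.1 d.2
      have hdval : n - 1 ≤ rho T d.1 + kap T d.2 := hbig d hd
      have hsub : T.filter (fun x => x.1 = c.1)
          ⊆ insert (c.1, d.2) (T.filter fun x => ¬(x.1 = d.1 ∨ x.2 = d.2)) := by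
        intro x hx
        rw [mem_filter] at hx
        by_cases hx2 : x.2 = d.2
        · have : x = (c.1, d.2) := Prod.ext hx.2 hx2
          rw [this]
          exact mem_insert_self _ _
        · apply mem_insert_of_mem
          rw [mem_filter]
          refine ⟨hx.1, ?_⟩
          push_neg
          exact ⟨by rw [hx.2]; exact fun he => hdne he.symm, hx2⟩
      have hsubc := card_le_card hsub
      have hins := card_insert_le (c.1, d.2) (T.filter fun x => ¬(x.1 = d.1 ∨ x.2 = d.2))
      unfold rho at *
      omega
    have hkap2 : ∀ c ∈ T, kap T c.2 ≤ 2 := by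
      intro c hc
      obtain ⟨d, hd, hdne⟩ := hcol c.2
      have hcb := cross_bound T d.1 d.2
      have hdval : n - 1 ≤ rho T d.1 + kap T d.2 := hbig d hd
      have hsub : T.filter (fun x => x.2 = c.2)
          ⊆ insert (d.1, c.2) (T.filter fun x => ¬(x.1 = d.1 ∨ x.2 = d.2)) := by
        intro x hx
        rw [mem_filter] at hx
        by_cases hx1 : x.1 = d.1
        · have : x = (d.1, c.2) := Prod.ext hx1 hx.2
          rw [this]
          exact mem_insert_self _ _
        · apply mem_insert_of_mem
          rw [mem_filter]
          refine ⟨hx.1, ?_⟩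
          push_neg
          exact ⟨hx1, by rw [hx.2]; exact fun he => hdne he.symm⟩
      have hsubc := card_le_card hsub
      have hins := card_insert_le (d.1, c.2) (T.filter fun x => ¬(x.1 = d.1 ∨ x.2 = d.2))
      unfold kap at *
      omega
    obtain ⟨c₀, hc₀⟩ := hne
    have hn5 : n ≤ 5 := by
      have h1 := hbig c₀ hc₀
      have h2 := hrho2 c₀ hc₀
      have h3 := hkap2 c₀ hc₀
      omega
    have hsumR : ∑ r ∈ T.image Prod.fst, rho T r = T.card :=
      (Finset.card_eq_sum_card_fiberwise
        (fun c hc => mem_image_of_mem Prod.fst hc)).symm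
    have hsumC : ∑ cc ∈ T.image Prod.snd, kap T cc = T.card :=
      (Finset.card_eq_sum_card_fiberwise
        (fun c hc => mem_image_of_mem Prod.snd hc)).symm
    have hmemT : ∀ c : Fin n × Fin n, c ∈ T → (c.1, c.2) ∈ T := fun c hc => by simpa using hc
    have hposR : ∀ r ∈ T.image Prod.fst, 1 ≤ rho T r := by
      intro r hr
      rw [mem_image] at hr
      obtain ⟨c, hcT, rfl⟩ := hr
      exact rho_pos T (hmemT c hcT)
    have hposC : ∀ cc ∈ T.image Prod.snd, 1 ≤ kap T cc := by
      intro cc hcc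
      rw [mem_image] at hcc
      obtain ⟨c, hcT, rfl⟩ := hcc
      exact kap_pos T (hmemT c hcT)
    -- rows with exactly two holes in the n = 5 situation, etc.
    have hrow_of_mem : ∀ r ∈ T.image Prod.fst, ∃ c ∈ T, c.1 = r := by
      intro r hr
      rw [mem_image] at hr
      obtain ⟨c, hcT, rfl⟩ := hr
      exact ⟨c, hcT, rfl⟩
    have hcol_of_mem : ∀ cc ∈ T.image Prod.snd, ∃ c ∈ T, c.2 = cc := by
      intro cc hcc
      rw [mem_image] at hcc
      obtain ⟨c, hcT, rfl⟩ := hcc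
      exact ⟨c, hcT, rfl⟩
    have hR2 : (T.image Prod.fst).card ≤ 2 := by
      by_contra hRc
      push_neg at hRc
      rcases (by omega : n = 4 ∨ n = 5) with hn4 | hn5'
      · -- n = 4 : three rows, each with one hole, forces every column count 2; parity
        have ht3 : T.card = 3 ∧ (T.image Prod.fst).card = 3 := by
          have h1 := Finset.card_nsmul_le_sum (T.image Prod.fst) (rho T) 1 hposR
          rw [smul_eq_mul, mul_one, hsumR] at h1
          constructor <;> omega
        have hrho1 : ∀ r ∈ T.image Prod.fst, rho T r = 1 := by
          intro r hr
          have hadd := Finset.add_sum_erase (T.image Prod.fst) (rho T) hr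
          have hrest : ∀ r' ∈ (T.image Prod.fst).erase r, 1 ≤ rho T r' := by
            intro r' hr'
            exact hposR r' (mem_of_mem_erase hr')
          have h2 := Finset.card_nsmul_le_sum ((T.image Prod.fst).erase r) (rho T) 1 hrest
          rw [smul_eq_mul, mul_one] at h2
          have h3 : ((T.image Prod.fst).erase r).card = 2 := by
            rw [card_erase_of_mem hr]
            omega
          have h4 := hposR r hr
          rw [hsumR] at hadd
          have h2' : ((T.image Prod.fst).erase r).card ≤ ∑ x ∈ (T.image Prod.fst).erase r, rho T x := h2
          omega
        have hkapall : ∀ c ∈ T, kap T c.2 = 2 := by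
          intro c hc
          have h1 := hbig c hc
          have h2 := hkap2 c hc
          have h3 := hrho1 c.1 (mem_image_of_mem Prod.fst hc)
          omega
        have hkapcol : ∀ cc ∈ T.image Prod.snd, kap T cc = 2 := by
          intro cc hcc
          obtain ⟨c, hcT, rfl⟩ := hcol_of_mem cc hcc
          exact hkapall c hcT
        have hsum2 : T.card = (T.image Prod.snd).card * 2 := by
          rw [← hsumC]
          exact Finset.sum_const_nat hkapcol
        omega
      · -- n = 5 : every hole-row has exactly two holes
        have hrho2' : ∀ r ∈ T.image Prod.fst, rho T r = 2 := by
          intro r hr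
          obtain ⟨c, hcT, rfl⟩ := hrow_of_mem r hr
          have h1 := hbig c hcT
          have h2 := hkap2 c hcT
          have h3 := hrho2 c hcT
          omega
        have hsum2 : T.card = (T.image Prod.fst).card * 2 := by
          rw [← hsumR]
          exact Finset.sum_const_nat hrho2'
        omega
    have hC2 : (T.image Prod.snd).card ≤ 2 := by
      by_contra hCc
      push_neg at hCc
      rcases (by omega : n = 4 ∨ n = 5) with hn4 | hn5'
      · have ht3 : T.card = 3 ∧ (T.image Prod.snd).card = 3 := by
          have h1 := Finset.card_nsmul_le_sum (T.image Prod.snd) (kap T) 1 hposC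
          rw [smul_eq_mul, mul_one, hsumC] at h1
          constructor <;> omega
        have hkap1 : ∀ cc ∈ T.image Prod.snd, kap T cc = 1 := by
          intro cc hcc
          have hadd := Finset.add_sum_erase (T.image Prod.snd) (kap T) hcc
          have hrest : ∀ c' ∈ (T.image Prod.snd).erase cc, 1 ≤ kap T c' := by
            intro c' hc'
            exact hposC c' (mem_of_mem_erase hc')
          have h2 := Finset.card_nsmul_le_sum ((T.image Prod.snd).erase cc) (kap T) 1 hrest
          rw [smul_eq_mul, mul_one] at h2
          have h3 : ((T.image Prod.snd).erase cc).card = 2 := by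
            rw [card_erase_of_mem hcc]
            omega
          have h4 := hposC cc hcc
          rw [hsumC] at hadd
          have h2' : ((T.image Prod.snd).erase cc).card ≤ ∑ x ∈ (T.image Prod.snd).erase cc, kap T x := h2
          omega
        have hrhoall : ∀ c ∈ T, rho T c.1 = 2 := by
          intro c hc
          have h1 := hbig c hc
          have h2 := hrho2 c hc
          have h3 := hkap1 c.2 (mem_image_of_mem Prod.snd hc)
          omega
        have hrhorow : ∀ r ∈ T.image Prod.fst, rho T r = 2 := by
          intro r hr
          obtain ⟨c, hcT, rfl⟩ := hrow_of_mem r hr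
          exact hrhoall c hcT
        have hsum2 : T.card = (T.image Prod.fst).card * 2 := by
          rw [← hsumR]
          exact Finset.sum_const_nat hrhorow
        omega
      · have hkap2' : ∀ cc ∈ T.image Prod.snd, kap T cc = 2 := by
          intro cc hcc
          obtain ⟨c, hcT, rfl⟩ := hcol_of_mem cc hcc
          have h1 := hbig c hcT
          have h2 := hkap2 c hcT
          have h3 := hrho2 c hcT
          omega
        have hsum2 : T.card = (T.image Prod.snd).card * 2 := by
          rw [← hsumC]
          exact Finset.sum_const_nat hkap2'
        omega
    -- a hole with row+column count at most n-1
    have hhole : ∃ c ∈ T, rho T c.1 + kap T c.2 ≤ n - 1 := by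
      rcases (by omega : n = 4 ∨ n = 5) with hn4 | hn5'
      · by_contra hcon
        push_neg at hcon
        have hforce : ∀ c ∈ T, rho T c.1 = 2 := by
          intro c hc
          have h1 := hcon c hc
          have h2 := hrho2 c hc
          have h3 := hkap2 c hc
          omega
        have hrhorow : ∀ r ∈ T.image Prod.fst, rho T r = 2 := by
          intro r hr
          obtain ⟨c, hcT, rfl⟩ := hrow_of_mem r hr
          exact hforce c hcT
        have hsum2 : T.card = (T.image Prod.fst).card * 2 := by
          rw [← hsumR]
          exact Finset.sum_const_nat hrhorow
        obtain ⟨d, hd, hdne⟩ := hrow c₀.1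
        have hpair : ({c₀.1, d.1} : Finset (Fin n)) ⊆ T.image Prod.fst := by
          intro x hx
          rw [mem_insert, mem_singleton] at hx
          rcases hx with rfl | rfl
          · exact mem_image_of_mem Prod.fst hc₀
          · exact mem_image_of_mem Prod.fst hd
        have hpc : ({c₀.1, d.1} : Finset (Fin n)).card = 2 :=
          card_pair (fun he => hdne he.symm)
        have := card_le_card hpair
        omega
      · refine ⟨c₀, hc₀, ?_⟩
        have h2 := hrho2 c₀ hc₀
        have h3 := hkap2 c₀ hc₀
        omega
    obtain ⟨c, hc, hcs⟩ := hhole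
    have hij : (c.1, c.2) ∈ T := hmemT c hc
    obtain ⟨a, ha, hphi, hz1, hz2⟩ :=
      exists_translate_zero hg hh hcard hn T hR2 hC2 c.1 c.2 hij
    have hsf : rho T c.1 + kap T c.2 + rho T (sig g hg a c.1) + kap T (tau h hh a c.2)
        ≤ n - 1 := by omega
    obtain ⟨i₁, j₁, w1, w2, w3, w4, w5, w6, w7, w8⟩ :=
      main_witness hg hh hcard hn T hT c.1 c.2 hij a ha hphi hsf
    exact ⟨c.1, c.2, a, i₁, j₁, hij, ha, w1, w2, w3, w4, w5, hphi, w6, w7, w8⟩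

end fillable

section fill

variable {g h : Fin n → G}

lemma fill_step (hg : Bijective g) (hh : Bijective h)
    {N m : Fin n → Fin n → G} (hN : QuadrangleCriterion N)
    (hm : ∀ i j, m i j = g i * h j)
    (T : Finset (Fin n × Fin n))
    (hfull : ∀ i j, (i, j) ∉ T → N i j = m i j)
    (i j : Fin n) (a : G) (i₁ j₁ : Fin n)
    (hi₁ : i₁ ≠ i) (hj₁ : j₁ ≠ j)
    (c1 : (i, j₁) ∉ T) (c2 : (i₁, j) ∉ T) (c3 : (i₁, j₁) ∉ T)
    (c4 : (sig g hg a i, tau h hh a j) ∉ T)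
    (c5 : (sig g hg a i, tau h hh a j₁) ∉ T)
    (c6 : (sig g hg a i₁, tau h hh a j) ∉ T)
    (c7 : (sig g hg a i₁, tau h hh a j₁) ∉ T) :
    N i j = m i j := by
  have minv : ∀ p q, m (sig g hg a p) (tau h hh a q) = m p q := by
    intro p q
    rw [hm, hm, sig_spec hg, tau_spec hh]
    group
  have e1 : N i₁ j₁ = N (sig g hg a i₁) (tau h hh a j₁) := by
    rw [hfull _ _ c3, hfull _ _ c7]
    exact (minv i₁ j₁).symm
  have e2 : N i j₁ = N (sig g hg a i) (tau h hh a j₁) := by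
    rw [hfull _ _ c1, hfull _ _ c5]
    exact (minv i j₁).symm
  have e3 : N i₁ j = N (sig g hg a i₁) (tau h hh a j) := by
    rw [hfull _ _ c2, hfull _ _ c6]
    exact (minv i₁ j).symm
  have key := hN i₁ i j₁ j (sig g hg a i₁) (sig g hg a i) (tau h hh a j₁) (tau h hh a j)
    hi₁ hj₁ ((sig g hg a).injective.ne hi₁) ((tau h hh a).injective.ne hj₁) e1 e2 e3
  rw [key, hfull _ _ c4]
  exact minv i j

end fill

section recursion

variable [DecidableEq G] {g h : Fin n → G}

lemma recon_aux (hg : Bijective g) (hh : Bijective h)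
    (hcard : Fintype.card G = n) (hn : 4 ≤ n)
    {N m : Fin n → Fin n → G} (hN : QuadrangleCriterion N)
    (hm : ∀ i j, m i j = g i * h j) :
    ∀ k (T : Finset (Fin n × Fin n)), T.card ≤ k → T.card ≤ n - 1 →
      (∀ i j, (i, j) ∉ T → N i j = m i j) → ∀ i j, N i j = m i j := by
  intro k
  induction k with
  | zero =>
    intro T hk _ hfull i j
    apply hfull
    intro hmem
    have := Finset.card_pos.mpr ⟨_, hmem⟩
    omega
  | succ k ih =>
    intro T hk hTn hfull i j
    rcases T.eq_empty_or_nonempty with rfl | hne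
    · exact hfull i j (notMem_empty _)
    · obtain ⟨i₀, j₀, a, i₁, j₁, hij₀, ha, w1, w2, w3, w4, w5, w6, w7, w8, w9⟩ :=
        exists_fillable hg hh hcard hn T hTn hne
      have hfix : N i₀ j₀ = m i₀ j₀ :=
        fill_step hg hh hN hm T hfull i₀ j₀ a i₁ j₁ w1 w2 w3 w4 w5 w6 w7 w8 w9
      refine ih (T.erase (i₀, j₀)) ?_ ?_ ?_ i j
      · rw [card_erase_of_mem hij₀]
        have := Finset.card_pos.mpr ⟨_, hij₀⟩
        omega
      · exact le_trans (card_le_card (erase_subset _ _)) hTn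
      · intro i' j' hmem
        by_cases hcell : (i', j') = (i₀, j₀)
        · rw [Prod.mk.injEq] at hcell
          rw [hcell.1, hcell.2]
          exact hfix
        · apply hfull
          intro h'
          exact hmem (mem_erase.mpr ⟨hcell, h'⟩)

end recursion

end CayleyRecon


/-- Every Cayley matrix of order `n > 3` with at most `n - 1` holes can be
reconstructed by the quadrangle criterion. -/
theorem cayley_matrix_reconstruction {n : ℕ} (hn : 3 < n)
    {G : Type*} [Group G] [Fintype G] (hcard : Fintype.card G = n)
    (g h : Fin n → G) (hg : Function.Bijective g) (hh : Function.Bijective h)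
    (m : Fin n → Fin n → G) (hm : ∀ i j, m i j = g i * h j)
    (T : Finset (Fin n × Fin n)) (hT : T.card ≤ n - 1)
    (N : Fin n → Fin n → G) (hN : QuadrangleCriterion N)
    (hfull : ∀ i j, (i, j) ∉ T → N i j = m i j) :
    N = m := by
  letI := Classical.decEq G
  funext i j
  exact CayleyRecon.recon_aux hg hh hcard (by omega) hN hm T.card T le_rfl hT hfull i j
end

section
/- Let n > 3, let G be a finite group with Fintype.card G = n, let m i j = g i * h j be a Cayley matrix of order n, and let T be a finite set of cells with |T| ≤ n - 1. Suppose (i₂, j₂) ∈ T and there exist i₁ ≠ i₂ and j₁ ≠ j₂ such that the cells (i₁, j₁), (i₂, j₁), (i₁, j₂) are not in T, and moreover m i₂ j₁ ≠ m i₁ j₂ and m i₁ j₁ ≠ m i₂ j₂. Then there exist i₁' ≠ i₂' and j₁' ≠ j₂' such that none of the four cells (i₁', j₁'), (i₂', j₁'), (i₁', j₂'), (i₂', j₂') lies in T and m i₁' j₁' = m i₁ j₁, m i₂' j₁' = m i₂ j₁, m i₁' j₂' = m i₁ j₂, m i₂' j₂' = m i₂ j₂. -/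
/-!
Write the row labels as `g i` and the column labels as `h j`, so that the entry of a cell is the
product of its labels. Multiplying all row labels on the right by `t` and all column labels on the
left by `t⁻¹` keeps the entries, so every `t ∈ G` moves the quadrangle to a quadrangle with the
same four values. Since these four values are pairwise distinct, a cell determines its corner in
the quadrangle, and then `t`; the `n` translates are therefore pairwise disjoint, and fewer than
`n` holes cannot meet all of them.
-/

open Function

theorem exists_forall_notMem_of_injective_uncurry {α ρ β : Type*} [Fintype α] {F : α → ρ → β}
    (hF : Injective (uncurry F)) {s : Finset β} (hs : s.card < Fintype.card α) :
    ∃ a, ∀ r, F a r ∉ s := by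
  by_contra! hmeet
  choose r hr using hmeet
  have hinj : Injective fun a => F a (r a) := fun a a' haa' =>
    congrArg Prod.fst (@hF (a, r a) (a', r a') haa')
  have := Finset.card_le_card_of_injOn (s := Finset.univ) _ (fun a _ => hr a) hinj.injOn
  rw [Finset.card_univ] at this
  omega

section Shift

variable {ι κ G : Type*} [Group G] (e : ι ≃ G) (f : κ ≃ G)

def rowShift (t : G) : ι ≃ ι := e.trans ((Equiv.mulRight t).trans e.symm)

def colShift (t : G) : κ ≃ κ := f.trans ((Equiv.mulLeft t⁻¹).trans f.symm)

@[simp]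
theorem apply_rowShift (t : G) (i : ι) : e (rowShift e t i) = e i * t := by
  simp [rowShift]

@[simp]
theorem apply_colShift (t : G) (j : κ) : f (colShift f t j) = t⁻¹ * f j := by
  simp [colShift]

theorem apply_rowShift_mul_apply_colShift (t : G) (i : ι) (j : κ) :
    e (rowShift e t i) * f (colShift f t j) = e i * f j := by
  simp [mul_assoc]

variable {ρ σ : Type*} {r : ρ → ι} {c : σ → κ}

theorem injective_mul_of_ne_of_ne (hr : Injective r) (hc : Injective c)
    (hdiag : ∀ k k' l l', k ≠ k' → l ≠ l' → e (r k) * f (c l) ≠ e (r k') * f (c l')) :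
    Injective fun p : ρ × σ => e (r p.1) * f (c p.2) := by
  rintro ⟨k, l⟩ ⟨k', l'⟩ heq
  dsimp only at heq
  by_cases hk : k = k'
  · subst hk
    exact Prod.ext rfl (hc (f.injective (mul_left_cancel heq)))
  by_cases hl : l = l'
  · subst hl
    exact Prod.ext (hr (e.injective (mul_right_cancel heq))) rfl
  exact absurd heq (hdiag k k' l l' hk hl)

theorem injective_uncurry_shift (hval : Injective fun p : ρ × σ => e (r p.1) * f (c p.2)) :
    Injective (uncurry fun (t : G) (p : ρ × σ) => (rowShift e t (r p.1), colShift f t (c p.2))) := by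
  rintro ⟨t, k, l⟩ ⟨t', k', l'⟩ heq
  simp only [uncurry_apply_pair, Prod.mk.injEq] at heq
  obtain ⟨hrow, hcol⟩ := heq
  have hcorner : (k, l) = (k', l') := hval <| calc
    e (r k) * f (c l) = e (rowShift e t (r k)) * f (colShift f t (c l)) :=
      (apply_rowShift_mul_apply_colShift e f t _ _).symm
    _ = e (rowShift e t' (r k')) * f (colShift f t' (c l')) := by rw [hrow, hcol]
    _ = e (r k') * f (c l') := apply_rowShift_mul_apply_colShift e f t' _ _
  simp only [Prod.mk.injEq] at hcorner
  obtain ⟨rfl, rfl⟩ := hcorner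
  have := congrArg e hrow
  simp only [apply_rowShift] at this
  rw [mul_left_cancel this]

theorem exists_shift_forall_notMem [Fintype G]
    (hval : Injective fun p : ρ × σ => e (r p.1) * f (c p.2))
    (T : Finset (ι × κ)) (hT : T.card < Fintype.card G) :
    ∃ t, ∀ k l, (rowShift e t (r k), colShift f t (c l)) ∉ T := by
  obtain ⟨t, ht⟩ := exists_forall_notMem_of_injective_uncurry (injective_uncurry_shift e f hval) hT
  exact ⟨t, fun k l => ht (k, l)⟩

end Shift

theorem exists_complete_matching_quadrangle_general {n : ℕ}
    {G : Type*} [Group G] [Fintype G] (hcard : Fintype.card G = n)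
    (g h : Fin n → G) (hg : Function.Bijective g) (hh : Function.Bijective h)
    (m : Fin n → Fin n → G) (hm : ∀ i j, m i j = g i * h j)
    (T : Finset (Fin n × Fin n)) (hT : T.card ≤ n - 1)
    (i₂ j₂ : Fin n)
    (i₁ j₁ : Fin n) (hi : i₁ ≠ i₂) (hj : j₁ ≠ j₂)
    (hC3a : m i₂ j₁ ≠ m i₁ j₂) (hC3b : m i₁ j₁ ≠ m i₂ j₂) :
    ∃ i₁' i₂' j₁' j₂' : Fin n, i₁' ≠ i₂' ∧ j₁' ≠ j₂' ∧
      (i₁', j₁') ∉ T ∧ (i₂', j₁') ∉ T ∧ (i₁', j₂') ∉ T ∧ (i₂', j₂') ∉ T ∧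
      m i₁' j₁' = m i₁ j₁ ∧ m i₂' j₁' = m i₂ j₁ ∧
      m i₁' j₂' = m i₁ j₂ ∧ m i₂' j₂' = m i₂ j₂ := by
  let e := Equiv.ofBijective g hg
  let f := Equiv.ofBijective h hh
  have hval : Injective fun p : Fin 2 × Fin 2 => e (![i₁, i₂] p.1) * f (![j₁, j₂] p.2) := by
    refine injective_mul_of_ne_of_ne e f ?_ ?_ ?_
    · intro a b; fin_cases a <;> fin_cases b <;> simp [hi, hi.symm]
    · intro a b; fin_cases a <;> fin_cases b <;> simp [hj, hj.symm]
    · simp only [Fin.forall_fin_two]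
      simp [e, f, ← hm, hC3a, hC3a.symm, hC3b, hC3b.symm]
  obtain ⟨t, ht⟩ := exists_shift_forall_notMem e f hval T (by have := i₁.pos; omega)
  refine ⟨rowShift e t i₁, rowShift e t i₂, colShift f t j₁, colShift f t j₂,
    (rowShift e t).injective.ne hi, (colShift f t).injective.ne hj,
    ht 0 0, ht 1 0, ht 0 1, ht 1 1, ?_, ?_, ?_, ?_⟩ <;>
    rw [hm, hm] <;> exact apply_rowShift_mul_apply_colShift e f t _ _

/-- Lemma: if a hole `(i₂, j₂)` of a partial Cayley matrix with at most `n - 1`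
holes lies in a quadrangle satisfying (C1), (C2), (C3), then there is a
complete quadrangle (all four cells full) with the same four values. -/
theorem exists_complete_matching_quadrangle {n : ℕ} (hn : 3 < n)
    {G : Type*} [Group G] [Fintype G] (hcard : Fintype.card G = n)
    (g h : Fin n → G) (hg : Function.Bijective g) (hh : Function.Bijective h)
    (m : Fin n → Fin n → G) (hm : ∀ i j, m i j = g i * h j)
    (T : Finset (Fin n × Fin n)) (hT : T.card ≤ n - 1)
    (i₂ j₂ : Fin n) (hd : (i₂, j₂) ∈ T)
    (i₁ j₁ : Fin n) (hi : i₁ ≠ i₂) (hj : j₁ ≠ j₂)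
    (hb : (i₁, j₁) ∉ T) (ha : (i₂, j₁) ∉ T) (hc : (i₁, j₂) ∉ T)
    (hC3a : m i₂ j₁ ≠ m i₁ j₂) (hC3b : m i₁ j₁ ≠ m i₂ j₂) :
    ∃ i₁' i₂' j₁' j₂' : Fin n, i₁' ≠ i₂' ∧ j₁' ≠ j₂' ∧
      (i₁', j₁') ∉ T ∧ (i₂', j₁') ∉ T ∧ (i₁', j₂') ∉ T ∧ (i₂', j₂') ∉ T ∧
      m i₁' j₁' = m i₁ j₁ ∧ m i₂' j₁' = m i₂ j₁ ∧
      m i₁' j₂' = m i₁ j₂ ∧ m i₂' j₂' = m i₂ j₂ :=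
  exists_complete_matching_quadrangle_general hcard g h hg hh m hm T hT i₂ j₂ i₁ j₁ hi hj hC3a hC3b
end

section
/- Let G be a group and let v_a, v_b, v_c, v_d ∈ G be pairwise distinct elements. Suppose (g₁, g₂, h₁, h₂) and (g₁', g₂', h₁', h₂') are two distinct quadruples in G⁴ each satisfying g₁ h₁ = v_b, g₂ h₁ = v_a, g₁ h₂ = v_c, g₂ h₂ = v_d (respectively with primes). Then the two sets of cells {g₁, g₂} × {h₁, h₂} and {g₁', g₂'} × {h₁', h₂'} are disjoint subsets of G × G. (That is, no two distinct quadrangles with the same four pairwise distinct corner values have a corner in common.) -/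
/-!
A quadrangle is rigid: its row `g₁` alone fixes `h₁ = g₁⁻¹ v_b` and `h₂ = g₁⁻¹ v_c`, and then
`g₂ = v_a h₁⁻¹`; likewise for `g₂`. So two quadrangles sharing a cell `(g, h)` are equal as soon as
`g` sits in the same row of both. It does: `g h ∈ {v_b, v_c}` if `g` is the first row and
`g h ∈ {v_a, v_d}` if it is the second, and these value sets are disjoint.
-/

section

variable {G : Type*} [Group G]

def IsQuadrangle (va vb vc vd g₁ g₂ h₁ h₂ : G) : Prop :=
  g₁ * h₁ = vb ∧ g₂ * h₁ = va ∧ g₁ * h₂ = vc ∧ g₂ * h₂ = vd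

namespace IsQuadrangle

variable {va vb vc vd g₁ g₂ h₁ h₂ g₁' g₂' h₁' h₂' g h : G}

theorem swap_rows (hQ : IsQuadrangle va vb vc vd g₁ g₂ h₁ h₂) :
    IsQuadrangle vb va vd vc g₂ g₁ h₁ h₂ :=
  ⟨hQ.2.1, hQ.1, hQ.2.2.2, hQ.2.2.1⟩

theorem eq_of_fst_eq (hQ : IsQuadrangle va vb vc vd g₁ g₂ h₁ h₂)
    (hQ' : IsQuadrangle va vb vc vd g₁' g₂' h₁' h₂') (hg : g₁ = g₁') :
    (g₁, g₂, h₁, h₂) = (g₁', g₂', h₁', h₂') := by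
  obtain ⟨e1, e2, e3, -⟩ := hQ
  obtain ⟨e1', e2', e3', -⟩ := hQ'
  subst hg
  obtain rfl : h₁ = h₁' := mul_left_cancel (e1.trans e1'.symm)
  obtain rfl : h₂ = h₂' := mul_left_cancel (e3.trans e3'.symm)
  obtain rfl : g₂ = g₂' := mul_right_cancel (e2.trans e2'.symm)
  rfl

theorem eq_of_snd_eq (hQ : IsQuadrangle va vb vc vd g₁ g₂ h₁ h₂)
    (hQ' : IsQuadrangle va vb vc vd g₁' g₂' h₁' h₂') (hg : g₂ = g₂') :
    (g₁, g₂, h₁, h₂) = (g₁', g₂', h₁', h₂') := by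
  have := hQ.swap_rows.eq_of_fst_eq hQ'.swap_rows hg
  simp only [Prod.mk.injEq] at this ⊢
  tauto

theorem fst_mul_eq_of_mem (hQ : IsQuadrangle va vb vc vd g₁ g₂ h₁ h₂) (hh : h ∈ ({h₁, h₂} : Set G)) :
    g₁ * h = vb ∨ g₁ * h = vc := by
  rcases hh with rfl | rfl
  exacts [Or.inl hQ.1, Or.inr hQ.2.2.1]

theorem fst_eq_or_snd_eq_of_mem (hab : va ≠ vb) (hac : va ≠ vc) (hbd : vb ≠ vd) (hcd : vc ≠ vd)
    (hQ : IsQuadrangle va vb vc vd g₁ g₂ h₁ h₂) (hQ' : IsQuadrangle va vb vc vd g₁' g₂' h₁' h₂')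
    (hg : g ∈ ({g₁, g₂} : Set G)) (hg' : g ∈ ({g₁', g₂'} : Set G))
    (hh : h ∈ ({h₁, h₂} : Set G)) (hh' : h ∈ ({h₁', h₂'} : Set G)) :
    g₁ = g₁' ∨ g₂ = g₂' := by
  have hdisj (x : G) (hx : x = vb ∨ x = vc) (hx' : x = va ∨ x = vd) : False := by
    rcases hx with rfl | rfl <;> rcases hx' with hx' | hx' <;> simp_all
  rcases hg with rfl | rfl <;> rcases hg' with hg' | hg'
  · exact Or.inl hg'
  · exact (hdisj _ (hQ.fst_mul_eq_of_mem hh) (hg' ▸ hQ'.swap_rows.fst_mul_eq_of_mem hh')).elim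
  · exact (hdisj _ (hg' ▸ hQ'.fst_mul_eq_of_mem hh') (hQ.swap_rows.fst_mul_eq_of_mem hh)).elim
  · exact Or.inr hg'

end IsQuadrangle

end

theorem quadrangles_disjoint_corners_general {G : Type*} [Group G]
    (va vb vc vd : G)
    (hab : va ≠ vb) (hac : va ≠ vc)
    (hbd : vb ≠ vd) (hcd : vc ≠ vd)
    (g₁ g₂ h₁ h₂ g₁' g₂' h₁' h₂' : G)
    (e1 : g₁ * h₁ = vb) (e2 : g₂ * h₁ = va) (e3 : g₁ * h₂ = vc) (e4 : g₂ * h₂ = vd)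
    (e1' : g₁' * h₁' = vb) (e2' : g₂' * h₁' = va) (e3' : g₁' * h₂' = vc)
    (e4' : g₂' * h₂' = vd)
    (hne : (g₁, g₂, h₁, h₂) ≠ (g₁', g₂', h₁', h₂')) :
    Disjoint (({g₁, g₂} : Set G) ×ˢ ({h₁, h₂} : Set G))
      (({g₁', g₂'} : Set G) ×ˢ ({h₁', h₂'} : Set G)) := by
  have hQ : IsQuadrangle va vb vc vd g₁ g₂ h₁ h₂ := ⟨e1, e2, e3, e4⟩
  have hQ' : IsQuadrangle va vb vc vd g₁' g₂' h₁' h₂' := ⟨e1', e2', e3', e4'⟩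
  rw [Set.disjoint_left]
  rintro ⟨g, h⟩ ⟨hg, hh⟩ ⟨hg', hh'⟩
  rcases IsQuadrangle.fst_eq_or_snd_eq_of_mem hab hac hbd hcd hQ hQ' hg hg' hh hh' with hrow | hrow
  exacts [hne (hQ.eq_of_fst_eq hQ' hrow), hne (hQ.eq_of_snd_eq hQ' hrow)]

/-- Two distinct quadrangles with the same four pairwise distinct corner values
have no corner (cell of `G × G`) in common. -/
theorem quadrangles_disjoint_corners {G : Type*} [Group G]
    (va vb vc vd : G)
    (hab : va ≠ vb) (hac : va ≠ vc) (had : va ≠ vd)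
    (hbc : vb ≠ vc) (hbd : vb ≠ vd) (hcd : vc ≠ vd)
    (g₁ g₂ h₁ h₂ g₁' g₂' h₁' h₂' : G)
    (e1 : g₁ * h₁ = vb) (e2 : g₂ * h₁ = va) (e3 : g₁ * h₂ = vc) (e4 : g₂ * h₂ = vd)
    (e1' : g₁' * h₁' = vb) (e2' : g₂' * h₁' = va) (e3' : g₁' * h₂' = vc)
    (e4' : g₂' * h₂' = vd)
    (hne : (g₁, g₂, h₁, h₂) ≠ (g₁', g₂', h₁', h₂')) :
    Disjoint (({g₁, g₂} : Set G) ×ˢ ({h₁, h₂} : Set G))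
      (({g₁', g₂'} : Set G) ×ˢ ({h₁', h₂'} : Set G)) :=
  quadrangles_disjoint_corners_general va vb vc vd hab hac hbd hcd g₁ g₂ h₁ h₂ g₁' g₂' h₁' h₂' e1 e2
    e3 e4 e1' e2' e3' e4' hne
end

section
/- Let n ≥ 3, let G be a finite group with Fintype.card G = n, and let m i j = g i * h j be a Cayley matrix of order n. Fix a cell (i₂, j₂). Then the number of pairs (i₁, j₁) with i₁ ≠ i₂ and j₁ ≠ j₂ such that m i₂ j₁ ≠ m i₁ j₂ and m i₁ j₁ ≠ m i₂ j₂ is at least (n - 1) * (n - 3). -/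
/-- In a Cayley matrix of order `n ≥ 3`, for a fixed cell `(i₂, j₂)` there are
at least `(n - 1) * (n - 3)` quadrangles at that cell satisfying
condition (C3). -/
theorem card_C3_quadrangles_ge {n : ℕ} (hn : 3 ≤ n)
    {G : Type*} [Group G] [Fintype G] [DecidableEq G] (hcard : Fintype.card G = n)
    (g h : Fin n → G) (hg : Function.Bijective g) (hh : Function.Bijective h)
    (m : Fin n → Fin n → G) (hm : ∀ i j, m i j = g i * h j)
    (i₂ j₂ : Fin n) :
    (n - 1) * (n - 3) ≤
      (Finset.univ.filter (fun p : Fin n × Fin n =>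
        p.1 ≠ i₂ ∧ p.2 ≠ j₂ ∧ m i₂ p.2 ≠ m p.1 j₂ ∧ m p.1 p.2 ≠ m i₂ j₂)).card := by
  classical
  set good := Finset.univ.filter (fun p : Fin n × Fin n =>
      p.1 ≠ i₂ ∧ p.2 ≠ j₂ ∧ m i₂ p.2 ≠ m p.1 j₂ ∧ m p.1 p.2 ≠ m i₂ j₂) with hgood
  set S := Finset.univ.filter (fun p : Fin n × Fin n => p.1 ≠ i₂ ∧ p.2 ≠ j₂) with hS
  set B1 := Finset.univ.filter (fun p : Fin n × Fin n =>
      p.1 ≠ i₂ ∧ p.2 ≠ j₂ ∧ m i₂ p.2 = m p.1 j₂) with hB1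
  set B2 := Finset.univ.filter (fun p : Fin n × Fin n =>
      p.1 ≠ i₂ ∧ p.2 ≠ j₂ ∧ m p.1 p.2 = m i₂ j₂) with hB2
  have hScard : S.card = (n - 1) * (n - 1) := by
    have : S = (Finset.univ.erase i₂) ×ˢ (Finset.univ.erase j₂) := by
      ext p
      simp [hS, Finset.mem_product, and_comm]
    rw [this, Finset.card_product, Finset.card_erase_of_mem (Finset.mem_univ _),
      Finset.card_erase_of_mem (Finset.mem_univ _)]
    simp
  have hsub : S ⊆ good ∪ B1 ∪ B2 := by
    intro p hp
    simp only [hS, Finset.mem_filter, Finset.mem_univ, true_and] at hp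
    by_cases h1 : m i₂ p.2 = m p.1 j₂
    · exact Finset.mem_union_left _ (Finset.mem_union_right _ (by
        simp [hB1, hp.1, hp.2, h1]))
    by_cases h2 : m p.1 p.2 = m i₂ j₂
    · exact Finset.mem_union_right _ (by simp [hB2, hp.1, hp.2, h2])
    · exact Finset.mem_union_left _ (Finset.mem_union_left _ (by
        simp [hgood, hp.1, hp.2, h1, h2]))
  have hB1card : B1.card ≤ n - 1 := by
    have : B1.card ≤ (Finset.univ.erase i₂).card := by
      apply Finset.card_le_card_of_injOn (fun p => p.1)
      · intro p hp
        simp only [hB1, Finset.mem_coe, Finset.mem_filter, Finset.mem_univ, true_and] at hp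
        simp [hp.1]
      · intro p hp q hq hpq
        simp only [hB1, Finset.coe_filter, Finset.mem_univ, true_and,
          Set.mem_setOf_eq] at hp hq
        have hpq' : p.1 = q.1 := hpq
        have : m i₂ p.2 = m i₂ q.2 := by rw [hp.2.2, hq.2.2, hpq']
        rw [hm, hm] at this
        have h2 : p.2 = q.2 := hh.injective (mul_left_cancel this)
        exact Prod.ext hpq' h2
    simpa [Finset.card_erase_of_mem (Finset.mem_univ _)] using this
  have hB2card : B2.card ≤ n - 1 := by
    have : B2.card ≤ (Finset.univ.erase i₂).card := by
      apply Finset.card_le_card_of_injOn (fun p => p.1)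
      · intro p hp
        simp only [hB2, Finset.mem_coe, Finset.mem_filter, Finset.mem_univ, true_and] at hp
        simp [hp.1]
      · intro p hp q hq hpq
        simp only [hB2, Finset.coe_filter, Finset.mem_univ, true_and,
          Set.mem_setOf_eq] at hp hq
        have hpq' : p.1 = q.1 := hpq
        have : m p.1 p.2 = m q.1 q.2 := by rw [hp.2.2, hq.2.2]
        rw [hm, hm, hpq'] at this
        have h2 : p.2 = q.2 := hh.injective (mul_left_cancel this)
        exact Prod.ext hpq' h2
    simpa [Finset.card_erase_of_mem (Finset.mem_univ _)] using this
  have hle : S.card ≤ good.card + B1.card + B2.card := by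
    calc S.card ≤ (good ∪ B1 ∪ B2).card := Finset.card_le_card hsub
    _ ≤ (good ∪ B1).card + B2.card := Finset.card_union_le _ _
    _ ≤ good.card + B1.card + B2.card := by
        exact Nat.add_le_add_right (Finset.card_union_le _ _) _
  obtain ⟨k, rfl⟩ : ∃ k, n = k + 3 := ⟨n - 3, by omega⟩
  have e1 : k + 3 - 1 = k + 2 := by omega
  have e2 : k + 3 - 3 = k := by omega
  rw [e1, e2]
  rw [hScard, e1] at hle
  rw [e1] at hB1card hB2card
  nlinarith [hle, hB1card, hB2card]
end

section
/- Let n be an odd natural number with n > 1, let m : ZMod n → ZMod n → ZMod n be the standard Cayley matrix of the cyclic group, m i j = i + j, and fix a cell (i₂, j₂) ∈ ZMod n × ZMod n. Then the number of pairs (i₁, j₁) with i₁ ≠ i₂ and j₁ ≠ j₂ such that i₂ + j₁ ≠ i₁ + j₂ and i₁ + j₁ ≠ i₂ + j₂ is exactly (n - 1) * (n - 3). (Hence the lower bound (n - 1)(n - 3) on the number of quadrangles satisfying (C3) cannot be improved in general.) -/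
/-!
Translating by `(i₂, j₂)` moves the cell to `(0, 0)`, where a quadrangle `(a, b)` satisfies (C3)
exactly when `a ≠ 0` and `b ∉ {0, a, -a}`. Without 2-torsion the three excluded values are
distinct for each of the `n - 1` admissible rows, leaving `n - 3` columns in each.
-/

open Finset

theorem ZMod.eq_zero_of_neg_eq_self_of_odd {n : ℕ} (hn : Odd n) {a : ZMod n} (h : -a = a) :
    a = 0 :=
  ((ZMod.neg_eq_self_iff a).mp h).resolve_right fun h2 => by
    obtain ⟨k, rfl⟩ := hn
    omega

section
variable {G : Type*} [AddCommGroup G]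

def c3Quadrangles (i₂ j₂ : G) : Set (G × G) :=
  {p | p.1 ≠ i₂ ∧ p.2 ≠ j₂ ∧ i₂ + p.2 ≠ p.1 + j₂ ∧ p.1 + p.2 ≠ i₂ + j₂}

theorem c3Quadrangles_eq_preimage_sub (i₂ j₂ : G) :
    c3Quadrangles i₂ j₂ = (· - (i₂, j₂)) ⁻¹' c3Quadrangles 0 0 := by
  ext ⟨x, y⟩
  simp only [c3Quadrangles, Set.mem_ofPred_eq, Set.mem_preimage, Prod.fst_sub, Prod.snd_sub,
    ne_eq, sub_eq_zero, sub_eq_sub_iff_add_eq_add, zero_add, add_zero, add_comm y i₂,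
    ← add_sub_add_comm]

theorem ncard_c3Quadrangles (i₂ j₂ : G) :
    (c3Quadrangles i₂ j₂).ncard = (c3Quadrangles (0 : G) 0).ncard := by
  rw [c3Quadrangles_eq_preimage_sub, Set.ncard_preimage_of_injective_subset_range
    sub_left_injective fun p _ => ⟨p + (i₂, j₂), add_sub_cancel_right p _⟩]

variable [Fintype G] [DecidableEq G]

theorem card_filter_c3Quadrangles_zero_fiber (h2 : ∀ a : G, -a = a → a = 0) (a : G) :
    #{b | a ≠ 0 ∧ b ≠ 0 ∧ b ≠ a ∧ a + b ≠ 0} = if a = 0 then 0 else Fintype.card G - 3 := by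
  split_ifs with ha
  · simp [ha]
  have hfiber : ({b | a ≠ 0 ∧ b ≠ 0 ∧ b ≠ a ∧ a + b ≠ 0} : Finset G) = {0, a, -a}ᶜ := by
    ext b
    simp [ha, add_eq_zero_iff_eq_neg']
  have hthree : #({0, a, -a} : Finset G) = 3 := by
    rw [card_eq_three]
    exact ⟨0, a, -a, Ne.symm ha, by simpa [eq_comm] using ha, fun h => ha (h2 a h.symm), rfl⟩
  rw [hfiber, card_compl, hthree]

theorem ncard_c3Quadrangles_zero (h2 : ∀ a : G, -a = a → a = 0) :
    (c3Quadrangles (0 : G) 0).ncard = (Fintype.card G - 1) * (Fintype.card G - 3) := by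
  simp only [c3Quadrangles, zero_add, add_zero]
  rw [Set.ncard_eq_toFinset_card', Set.toFinset_ofPred, card_filter, Fintype.sum_prod_type]
  simp_rw [← card_filter, card_filter_c3Quadrangles_zero_fiber h2]
  simp [sum_ite, filter_ne']

end

theorem card_C3_quadrangles_cyclic_odd_general (n : ℕ) (hodd : Odd n)
    (i₂ j₂ : ZMod n) :
    {p : ZMod n × ZMod n | p.1 ≠ i₂ ∧ p.2 ≠ j₂ ∧
        i₂ + p.2 ≠ p.1 + j₂ ∧ p.1 + p.2 ≠ i₂ + j₂}.ncard
      = (n - 1) * (n - 3) := by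
  have : NeZero n := ⟨hodd.pos.ne'⟩
  rw [← c3Quadrangles, ncard_c3Quadrangles, ncard_c3Quadrangles_zero
    fun _ => ZMod.eq_zero_of_neg_eq_self_of_odd hodd, ZMod.card]

/-- For the standard Cayley matrix `m i j = i + j` of the cyclic group `ZMod n`
with `n > 1` odd, the number of quadrangles at any fixed cell `(i₂, j₂)`
satisfying (C3) is exactly `(n - 1) * (n - 3)`, so the general lower bound is
sharp. -/
theorem card_C3_quadrangles_cyclic_odd (n : ℕ) (hodd : Odd n) (hn : 1 < n)
    (i₂ j₂ : ZMod n) :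
    {p : ZMod n × ZMod n | p.1 ≠ i₂ ∧ p.2 ≠ j₂ ∧
        i₂ + p.2 ≠ p.1 + j₂ ∧ p.1 + p.2 ≠ i₂ + j₂}.ncard
      = (n - 1) * (n - 3) :=
  card_C3_quadrangles_cyclic_odd_general n hodd i₂ j₂
end

section
/- Let n > 3, let G be a finite group with Fintype.card G = n, let m i j = g i * h j be a Cayley matrix of order n, and let T be a finite set of cells with |T| ≤ n - 1. Fix a hole (i₂, j₂) ∈ T and set t_x = |{i ≠ i₂ : (i, j₂) ∈ T}| and t_y = |{j ≠ j₂ : (i₂, j) ∈ T}|. If t_x + t_y ≤ 1, then there exist i₁ ≠ i₂ and j₁ ≠ j₂ such that the cells (i₁, j₁), (i₂, j₁), (i₁, j₂) are not in T, m i₂ j₁ ≠ m i₁ j₂, and m i₁ j₁ ≠ m i₂ j₂. (That is, there is at least one quadrangle at the hole satisfying (C1), (C2) and (C3).) -/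
open Finset

/-- Core counting lemma: asymmetric version assuming the column of the hole is
otherwise clean (`t_x = 0`) and `t_y ≤ 1`. -/
private lemma aux_quadrangle {n : ℕ} (hn : 3 < n) {α : Type*}
    (m : Fin n → Fin n → α) (i₂ j₂ : Fin n)
    (hinj1 : ∀ j i i', m i₂ j = m i j₂ → m i₂ j = m i' j₂ → i = i')
    (hinj2 : ∀ j i i', m i j = m i₂ j₂ → m i' j = m i₂ j₂ → i = i')
    (T : Finset (Fin n × Fin n)) (hT : T.card ≤ n - 1) (hd : (i₂, j₂) ∈ T)
    (htx : ∀ i : Fin n, i ≠ i₂ → (i, j₂) ∉ T)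
    (hty : (Finset.univ.filter (fun j : Fin n => j ≠ j₂ ∧ (i₂, j) ∈ T)).card ≤ 1) :
    ∃ i₁ j₁ : Fin n, i₁ ≠ i₂ ∧ j₁ ≠ j₂ ∧
      (i₁, j₁) ∉ T ∧ (i₂, j₁) ∉ T ∧ (i₁, j₂) ∉ T ∧
      m i₂ j₁ ≠ m i₁ j₂ ∧ m i₁ j₁ ≠ m i₂ j₂ := by
  classical
  by_contra hcon
  push_neg at hcon
  set Ty := Finset.univ.filter (fun j : Fin n => j ≠ j₂ ∧ (i₂, j) ∈ T) with hTy
  set Sj := Finset.univ.filter (fun j : Fin n => j ≠ j₂ ∧ (i₂, j) ∉ T) with hSj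
  set Si := Finset.univ.filter (fun i : Fin n => i ≠ i₂) with hSi
  have hSicard : Si.card = n - 1 := by
    rw [hSi, filter_ne', card_erase_of_mem (mem_univ _), card_univ, Fintype.card_fin]
  have hsplit : Sj.card + Ty.card = n - 1 := by
    have h1 : Sj ∪ Ty = Finset.univ.filter (fun j : Fin n => j ≠ j₂) := by
      ext j
      simp only [hSj, hTy, mem_union, mem_filter, mem_univ, true_and]
      tauto
    have h2 : Disjoint Sj Ty := by
      simp only [disjoint_left, hSj, hTy, mem_filter, mem_univ, true_and]
      tauto
    have h3 := card_union_of_disjoint h2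
    rw [h1, filter_ne', card_erase_of_mem (mem_univ _), card_univ, Fintype.card_fin] at h3
    omega
  set P := Si ×ˢ Sj with hP
  set A := P.filter (fun p => p ∈ T) with hA
  set B := P.filter (fun p => m i₂ p.2 = m p.1 j₂) with hB
  set C := P.filter (fun p => m p.1 p.2 = m i₂ j₂) with hC
  have hcover : P ⊆ A ∪ B ∪ C := by
    intro p hp
    have hp' := hp
    simp only [hP, mem_product, hSi, hSj, mem_filter, mem_univ, true_and] at hp'
    obtain ⟨hi, hj, hjT⟩ := hp'
    by_cases h1 : p ∈ T
    · exact mem_union_left _ (mem_union_left _ (mem_filter.2 ⟨hp, h1⟩))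
    by_cases h2 : m i₂ p.2 = m p.1 j₂
    · exact mem_union_left _ (mem_union_right _ (mem_filter.2 ⟨hp, h2⟩))
    refine mem_union_right _ (mem_filter.2 ⟨hp, ?_⟩)
    have hpT : (p.1, p.2) ∉ T := by simpa using h1
    exact hcon p.1 p.2 hi hj hpT hjT (htx p.1 hi) h2
  have hAbound : A.card + 1 + Ty.card ≤ n - 1 := by
    have hsub : A ∪ insert (i₂, j₂) (Ty.image (fun j => (i₂, j))) ⊆ T := by
      intro p hp
      rcases mem_union.1 hp with h | h
      · exact (mem_filter.1 h).2
      rcases mem_insert.1 h with h | h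
      · rw [h]; exact hd
      · obtain ⟨j, hj, rfl⟩ := mem_image.1 h
        exact ((mem_filter.1 hj).2).2
    have hdisj : Disjoint A (insert (i₂, j₂) (Ty.image (fun j => (i₂, j)))) := by
      simp only [disjoint_left]
      intro p hp hmem
      have h1 : p.1 ≠ i₂ := by
        have := (mem_filter.1 hp).1
        simp only [hP, mem_product, hSi, mem_filter, mem_univ, true_and] at this
        exact this.1
      rcases mem_insert.1 hmem with h | h
      · exact h1 (by rw [h])
      · obtain ⟨j, hj, hjeq⟩ := mem_image.1 h
        exact h1 (by rw [← hjeq])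
    have hins : ((i₂, j₂) : Fin n × Fin n) ∉ Ty.image (fun j => (i₂, j)) := by
      intro hmem
      obtain ⟨j, hj, hjeq⟩ := mem_image.1 hmem
      exact ((mem_filter.1 hj).2).1 (congrArg Prod.snd hjeq)
    have himg : (Ty.image (fun j => (i₂, j))).card = Ty.card :=
      card_image_of_injective _ (fun a b hab => congrArg Prod.snd hab)
    have hle := card_le_card hsub
    rw [card_union_of_disjoint hdisj, card_insert_of_notMem hins, himg] at hle
    omega
  have hBbound : B.card ≤ Sj.card := by
    apply card_le_card_of_injOn (fun p => p.2)
    · intro p hp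
      have := (mem_filter.1 hp).1
      simp only [hP, mem_product] at this
      exact this.2
    · intro p hp q hq hpq
      have hpB := (mem_filter.1 hp).2
      have hqB := (mem_filter.1 hq).2
      have hpq' : p.2 = q.2 := hpq
      have hq2 : m i₂ p.2 = m q.1 j₂ := by rw [hpq']; exact hqB
      exact Prod.ext (hinj1 p.2 p.1 q.1 hpB hq2) hpq'
  have hCbound : C.card ≤ Sj.card := by
    apply card_le_card_of_injOn (fun p => p.2)
    · intro p hp
      have := (mem_filter.1 hp).1
      simp only [hP, mem_product] at this
      exact this.2
    · intro p hp q hq hpq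
      have hpC := (mem_filter.1 hp).2
      have hqC := (mem_filter.1 hq).2
      have hpq' : p.2 = q.2 := hpq
      have hq2 : m q.1 p.2 = m i₂ j₂ := by rw [hpq']; exact hqC
      exact Prod.ext (hinj2 p.2 p.1 q.1 hpC hq2) hpq'
  have hPcard : P.card = (n - 1) * Sj.card := by
    rw [hP, card_product, hSicard]
  have h3s : 3 * Sj.card ≤ (n - 1) * Sj.card :=
    Nat.mul_le_mul_right _ (by omega)
  have hle := card_le_card hcover
  have hle2 : (A ∪ B ∪ C).card ≤ A.card + B.card + C.card :=
    le_trans (card_union_le _ _) (Nat.add_le_add_right (card_union_le _ _) _)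
  have key : 3 * Sj.card ≤ A.card + B.card + C.card := by
    calc 3 * Sj.card ≤ (n - 1) * Sj.card := h3s
      _ = P.card := hPcard.symm
      _ ≤ (A ∪ B ∪ C).card := hle
      _ ≤ A.card + B.card + C.card := hle2
  omega

/-- Auxiliary lemma: if a partial Cayley matrix of order `n > 3` has at most
`n - 1` holes and the hole `(i₂, j₂)` has at most one other hole in its row and
column combined, then there is a quadrangle at `(i₂, j₂)` satisfying (C1), (C2)
and (C3). -/
theorem exists_quadrangle_of_txy_le_one {n : ℕ} (hn : 3 < n)
    {G : Type*} [Group G] [Fintype G] (hcard : Fintype.card G = n)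
    (g h : Fin n → G) (hg : Function.Bijective g) (hh : Function.Bijective h)
    (m : Fin n → Fin n → G) (hm : ∀ i j, m i j = g i * h j)
    (T : Finset (Fin n × Fin n)) (hT : T.card ≤ n - 1)
    (i₂ j₂ : Fin n) (hd : (i₂, j₂) ∈ T)
    (htxy : (Finset.univ.filter (fun i : Fin n => i ≠ i₂ ∧ (i, j₂) ∈ T)).card +
            (Finset.univ.filter (fun j : Fin n => j ≠ j₂ ∧ (i₂, j) ∈ T)).card ≤ 1) :
    ∃ i₁ j₁ : Fin n, i₁ ≠ i₂ ∧ j₁ ≠ j₂ ∧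
      (i₁, j₁) ∉ T ∧ (i₂, j₁) ∉ T ∧ (i₁, j₂) ∉ T ∧
      m i₂ j₁ ≠ m i₁ j₂ ∧ m i₁ j₁ ≠ m i₂ j₂ := by
  have hgi : Function.Injective g := hg.1
  have hhi : Function.Injective h := hh.1
  by_cases htx : (Finset.univ.filter (fun i : Fin n => i ≠ i₂ ∧ (i, j₂) ∈ T)).card = 0
  · -- t_x = 0 : apply the lemma directly
    have htx' : ∀ i : Fin n, i ≠ i₂ → (i, j₂) ∉ T := by
      intro i hi hiT
      have h0 := Finset.card_eq_zero.1 htx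
      have hmem : i ∈ (Finset.univ.filter (fun i : Fin n => i ≠ i₂ ∧ (i, j₂) ∈ T)) :=
        mem_filter.2 ⟨mem_univ _, hi, hiT⟩
      rw [h0] at hmem
      exact absurd hmem (notMem_empty _)
    refine aux_quadrangle hn m i₂ j₂ ?_ ?_ T hT hd htx' (by omega)
    · intro j i i' h1 h2
      have h3 := h1.symm.trans h2
      rw [hm, hm] at h3
      exact hgi (mul_right_cancel h3)
    · intro j i i' h1 h2
      have h3 := h1.trans h2.symm
      rw [hm, hm] at h3
      exact hgi (mul_right_cancel h3)
  · -- t_y = 0 : transpose and apply the lemma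
    have hty : (Finset.univ.filter (fun j : Fin n => j ≠ j₂ ∧ (i₂, j) ∈ T)).card = 0 := by
      omega
    have htx1 : (Finset.univ.filter (fun i : Fin n => i ≠ i₂ ∧ (i, j₂) ∈ T)).card ≤ 1 := by
      omega
    have hty' : ∀ j : Fin n, j ≠ j₂ → (i₂, j) ∉ T := by
      intro j hj hjT
      have h0 := Finset.card_eq_zero.1 hty
      have hmem : j ∈ (Finset.univ.filter (fun j : Fin n => j ≠ j₂ ∧ (i₂, j) ∈ T)) :=
        mem_filter.2 ⟨mem_univ _, hj, hjT⟩
      rw [h0] at hmem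
      exact absurd hmem (notMem_empty _)
    set T' := T.image Prod.swap with hT'def
    have hswap : ∀ a b : Fin n, (a, b) ∈ T' ↔ (b, a) ∈ T := by
      intro a b
      simp only [hT'def, mem_image, Prod.exists, Prod.swap_prod_mk, Prod.mk.injEq]
      constructor
      · rintro ⟨x, y, hxy, rfl, rfl⟩; exact hxy
      · intro hmem; exact ⟨b, a, hmem, rfl, rfl⟩
    have hT'card : T'.card = T.card :=
      card_image_of_injective _ Prod.swap_injective
    obtain ⟨a, b, ha, hb, h1, h2, h3, h4, h5⟩ :=
      aux_quadrangle hn (fun x y => m y x) j₂ i₂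
        (fun j i i' ha hb => by
          have hc : m i₂ i = m i₂ i' := ha.symm.trans hb
          rw [hm, hm] at hc
          exact hhi (mul_left_cancel hc))
        (fun j i i' ha hb => by
          have hc : m j i = m j i' := ha.trans hb.symm
          rw [hm, hm] at hc
          exact hhi (mul_left_cancel hc))
        T' (hT'card ▸ hT) ((hswap j₂ i₂).2 hd)
        (fun i hi => fun hmem => hty' i hi ((hswap i i₂).1 hmem))
        (by
          have heq : (Finset.univ.filter (fun j : Fin n => j ≠ i₂ ∧ (j₂, j) ∈ T')) =
              (Finset.univ.filter (fun j : Fin n => j ≠ i₂ ∧ (j, j₂) ∈ T)) := by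
            ext j
            simp only [mem_filter, mem_univ, true_and, hswap]
          rw [heq]
          exact htx1)
    exact ⟨b, a, hb, ha, fun hmem => h1 ((hswap a b).2 hmem),
      fun hmem => h3 ((hswap a i₂).2 hmem),
      fun hmem => h2 ((hswap j₂ b).2 hmem),
      fun heq => h4 heq.symm, h5⟩
end

section
/- Let n ≥ 3, let G be a finite group with Fintype.card G = n, let m i j = g i * h j be a Cayley matrix of order n, and let T be a finite set of cells. Fix a hole (i₂, j₂) ∈ T and set t₀ = |{(i, j) ∈ T : i ≠ i₂ and j ≠ j₂}|, t_x = |{i ≠ i₂ : (i, j₂) ∈ T}|, and t_y = |{j ≠ j₂ : (i₂, j) ∈ T}|. Then the number of pairs (i₁, j₁) with i₁ ≠ i₂, j₁ ≠ j₂ such that (i₁, j₁), (i₂, j₁), (i₁, j₂) ∉ T, m i₂ j₁ ≠ m i₁ j₂, and m i₁ j₁ ≠ m i₂ j₂ is at least (n - 1) * (n - 3) - t₀ - (t_x + t_y) * (n - 2). -/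
/-!
A Cayley matrix is a Latin square, so each equation of (C3) picks exactly one cell in every row
and every column. Of the `(n - 1)²` cells off the row and column of the hole, at most `t₀` lie in
`T`. A row `i` with `(i, j₂) ∈ T` loses all `n - 1` of its cells to (C2), but one of them is among
the at most `n - 1` cells where `m i₂ j = m i j₂`; so the row holes and this equation together
exclude at most `t_x (n - 2) + (n - 1)` cells, and symmetrically the column holes and the other
equation at most `t_y (n - 2) + (n - 1)`.
-/

open Finset Function

def IsLatinSquare {α β G : Type*} (m : α → β → G) : Prop :=
  (∀ i, Bijective (m i)) ∧ ∀ j, Bijective (fun i => m i j)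

theorem isLatinSquare_mul {α β G : Type*} [Group G] {g : α → G} {h : β → G}
    (hg : Bijective g) (hh : Bijective h) : IsLatinSquare (fun i j => g i * h j) :=
  ⟨fun i => (Group.mulLeft_bijective (g i)).comp hh,
    fun j => (Group.mulRight_bijective (h j)).comp hg⟩

theorem Finset.card_union_add_card_le_of_surjOn {γ δ : Type*} [DecidableEq γ]
    {s t : Finset γ} {u : Finset δ} {f : γ → δ} (hf : Set.SurjOn f ↑(s ∩ t) ↑u) :
    (s ∪ t).card + u.card ≤ s.card + t.card := by
  have := card_le_card_of_surjOn f hf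
  have := card_union_add_card_inter s t
  omega

namespace IsLatinSquare

variable {α β G : Type*} [Fintype α] [Fintype β] [DecidableEq α] [DecidableEq β]
  [DecidableEq G] {m : α → β → G}

theorem card_filter_sideCorners_eq_le (hm : IsLatinSquare m) (i₂ : α) (j₂ : β) :
    (((univ.erase i₂) ×ˢ (univ.erase j₂)).filter
      (fun p => m i₂ p.2 = m p.1 j₂)).card ≤ Fintype.card α - 1 := by
  rw [← card_univ, ← card_erase_of_mem (mem_univ i₂)]
  refine card_le_card_of_injOn Prod.fst (fun p hp => ?_) (fun p hp q hq hpq => ?_)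
  · simp only [coe_filter, mem_product, Set.mem_ofPred_eq] at hp
    exact hp.1.1
  · simp only [coe_filter, Set.mem_ofPred_eq] at hp hq
    refine Prod.ext hpq ((hm.1 i₂).1 ?_)
    rw [hp.2, hq.2, hpq]

theorem card_filter_oppositeCorners_eq_le (hm : IsLatinSquare m) (i₂ : α) (j₂ : β) :
    (((univ.erase i₂) ×ˢ (univ.erase j₂)).filter
      (fun p => m p.1 p.2 = m i₂ j₂)).card ≤ Fintype.card β - 1 := by
  rw [← card_univ, ← card_erase_of_mem (mem_univ j₂)]
  refine card_le_card_of_injOn Prod.snd (fun p hp => ?_) (fun p hp q hq hpq => ?_)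
  · simp only [coe_filter, mem_product, Set.mem_ofPred_eq] at hp
    exact hp.1.2
  · simp only [coe_filter, Set.mem_ofPred_eq] at hp hq
    refine Prod.ext ((hm.2 p.2).1 ?_) hpq
    show m p.1 p.2 = m q.1 p.2
    rw [hp.2, hpq, hq.2]

theorem card_rowHoles_union_le (hm : IsLatinSquare m) (T : Finset (α × β)) (i₂ : α) (j₂ : β) :
    ((univ.filter (fun i => i ≠ i₂ ∧ (i, j₂) ∈ T)) ×ˢ univ.erase j₂ ∪
      ((univ.erase i₂) ×ˢ (univ.erase j₂)).filter (fun p => m i₂ p.2 = m p.1 j₂)).card ≤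
      (univ.filter (fun i => i ≠ i₂ ∧ (i, j₂) ∈ T)).card * (Fintype.card β - 2) +
        (Fintype.card α - 1) := by
  set I := univ.filter (fun i => i ≠ i₂ ∧ (i, j₂) ∈ T)
  set B := ((univ.erase i₂) ×ˢ (univ.erase j₂)).filter (fun p => m i₂ p.2 = m p.1 j₂)
  have hsurj : Set.SurjOn Prod.fst (↑(I ×ˢ univ.erase j₂ ∩ B) : Set (α × β)) ↑I := by
    intro i hi
    have hi' : i ≠ i₂ ∧ (i, j₂) ∈ T := by simpa [I] using hi
    obtain ⟨j, hj⟩ := (hm.1 i₂).2 (m i j₂)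
    have hj₂ : j ≠ j₂ := by
      rintro rfl
      exact hi'.1 ((hm.2 j).1 hj).symm
    exact ⟨(i, j), by simp [I, B, hi', hj₂, hj], rfl⟩
  have hunion := card_union_add_card_le_of_surjOn hsurj
  have hB : B.card ≤ Fintype.card α - 1 := hm.card_filter_sideCorners_eq_le i₂ j₂
  rw [card_product, card_erase_of_mem (mem_univ _), card_univ] at hunion
  have hsub : I.card * (Fintype.card β - 1) ≤ I.card * (Fintype.card β - 2) + I.card := by
    rw [← Nat.mul_add_one]
    exact Nat.mul_le_mul_left _ (by omega)
  omega

theorem card_colHoles_union_le (hm : IsLatinSquare m) (T : Finset (α × β)) (i₂ : α) (j₂ : β) :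
    (univ.erase i₂ ×ˢ (univ.filter (fun j => j ≠ j₂ ∧ (i₂, j) ∈ T)) ∪
      ((univ.erase i₂) ×ˢ (univ.erase j₂)).filter (fun p => m p.1 p.2 = m i₂ j₂)).card ≤
      (univ.filter (fun j => j ≠ j₂ ∧ (i₂, j) ∈ T)).card * (Fintype.card α - 2) +
        (Fintype.card β - 1) := by
  set J := univ.filter (fun j => j ≠ j₂ ∧ (i₂, j) ∈ T)
  set B := ((univ.erase i₂) ×ˢ (univ.erase j₂)).filter (fun p => m p.1 p.2 = m i₂ j₂)
  have hsurj : Set.SurjOn Prod.snd (↑(univ.erase i₂ ×ˢ J ∩ B) : Set (α × β)) ↑J := by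
    intro j hj
    have hj' : j ≠ j₂ ∧ (i₂, j) ∈ T := by simpa [J] using hj
    obtain ⟨i, hi⟩ := (hm.2 j).2 (m i₂ j₂)
    have hi₂ : i ≠ i₂ := by
      rintro rfl
      exact hj'.1 ((hm.1 i).1 hi)
    exact ⟨(i, j), by simp [J, B, hj', hi₂, hi], rfl⟩
  have hunion := card_union_add_card_le_of_surjOn hsurj
  have hB : B.card ≤ Fintype.card β - 1 := hm.card_filter_oppositeCorners_eq_le i₂ j₂
  rw [card_product, card_erase_of_mem (mem_univ _), card_univ] at hunion
  have hsub : (Fintype.card α - 1) * J.card ≤ J.card * (Fintype.card α - 2) + J.card := by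
    rw [← Nat.mul_add_one, mul_comm]
    exact Nat.mul_le_mul_left _ (by omega)
  omega

theorem card_quadrangles_add_ge (hm : IsLatinSquare m) (T : Finset (α × β)) (i₂ : α) (j₂ : β) :
    (Fintype.card α - 1) * (Fintype.card β - 1) ≤
      (univ.filter (fun p : α × β =>
          p.1 ≠ i₂ ∧ p.2 ≠ j₂ ∧
          (p.1, p.2) ∉ T ∧ (i₂, p.2) ∉ T ∧ (p.1, j₂) ∉ T ∧
          m i₂ p.2 ≠ m p.1 j₂ ∧ m p.1 p.2 ≠ m i₂ j₂)).card +
        (T.filter (fun c => c.1 ≠ i₂ ∧ c.2 ≠ j₂)).card +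
        ((univ.filter (fun i => i ≠ i₂ ∧ (i, j₂) ∈ T)).card * (Fintype.card β - 2) +
          (Fintype.card α - 1)) +
        ((univ.filter (fun j => j ≠ j₂ ∧ (i₂, j) ∈ T)).card * (Fintype.card α - 2) +
          (Fintype.card β - 1)) := by
  set S := univ.filter (fun p : α × β =>
    p.1 ≠ i₂ ∧ p.2 ≠ j₂ ∧ (p.1, p.2) ∉ T ∧ (i₂, p.2) ∉ T ∧ (p.1, j₂) ∉ T ∧
      m i₂ p.2 ≠ m p.1 j₂ ∧ m p.1 p.2 ≠ m i₂ j₂)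
  set T₀ := T.filter (fun c => c.1 ≠ i₂ ∧ c.2 ≠ j₂)
  set rowBad := (univ.filter (fun i => i ≠ i₂ ∧ (i, j₂) ∈ T)) ×ˢ univ.erase j₂ ∪
    ((univ.erase i₂) ×ˢ (univ.erase j₂)).filter (fun p => m i₂ p.2 = m p.1 j₂)
  set colBad := univ.erase i₂ ×ˢ (univ.filter (fun j => j ≠ j₂ ∧ (i₂, j) ∈ T)) ∪
    ((univ.erase i₂) ×ˢ (univ.erase j₂)).filter (fun p => m p.1 p.2 = m i₂ j₂)
  have hcover : univ.erase i₂ ×ˢ univ.erase j₂ ⊆ S ∪ T₀ ∪ rowBad ∪ colBad := by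
    rintro ⟨i, j⟩ hp
    simp only [mem_product, mem_erase, mem_univ, and_true] at hp
    simp only [S, T₀, rowBad, colBad, mem_union, mem_filter, mem_product, mem_erase, mem_univ,
      true_and, and_true, hp, ne_eq, not_false_eq_true]
    tauto
  calc (Fintype.card α - 1) * (Fintype.card β - 1)
      = (univ.erase i₂ ×ˢ univ.erase j₂).card := by
        rw [card_product, card_erase_of_mem (mem_univ _), card_erase_of_mem (mem_univ _),
          card_univ, card_univ]
    _ ≤ (S ∪ T₀ ∪ rowBad ∪ colBad).card := card_le_card hcover
    _ ≤ S.card + T₀.card + rowBad.card + colBad.card := by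
        grw [card_union_le, card_union_le, card_union_le]
    _ ≤ _ := by
        grw [hm.card_rowHoles_union_le T i₂ j₂, hm.card_colHoles_union_le T i₂ j₂]

end IsLatinSquare

theorem card_C123_quadrangles_ge_general {n : ℕ}
    {G : Type*} [Group G] [DecidableEq G]
    (g h : Fin n → G) (hg : Function.Bijective g) (hh : Function.Bijective h)
    (m : Fin n → Fin n → G) (hm : ∀ i j, m i j = g i * h j)
    (T : Finset (Fin n × Fin n))
    (i₂ j₂ : Fin n) :
    (n - 1) * (n - 3)
        - (T.filter (fun c => c.1 ≠ i₂ ∧ c.2 ≠ j₂)).card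
        - ((Finset.univ.filter (fun i : Fin n => i ≠ i₂ ∧ (i, j₂) ∈ T)).card +
           (Finset.univ.filter (fun j : Fin n => j ≠ j₂ ∧ (i₂, j) ∈ T)).card) * (n - 2)
      ≤ (Finset.univ.filter (fun p : Fin n × Fin n =>
          p.1 ≠ i₂ ∧ p.2 ≠ j₂ ∧
          (p.1, p.2) ∉ T ∧ (i₂, p.2) ∉ T ∧ (p.1, j₂) ∉ T ∧
          m i₂ p.2 ≠ m p.1 j₂ ∧ m p.1 p.2 ≠ m i₂ j₂)).card := by
  have hlatin : IsLatinSquare m := (funext₂ hm : m = _) ▸ isLatinSquare_mul hg hh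
  have hcount := hlatin.card_quadrangles_add_ge T i₂ j₂
  simp only [Fintype.card_fin] at hcount
  have hrect : (n - 1) * (n - 3) = (n - 1) * (n - 1) - (n - 1) * 2 := by
    rw [← Nat.mul_sub, Nat.sub_sub]
  rw [add_mul]
  omega

/-- Counting bound: for a hole `(i₂, j₂)` of a partial Cayley matrix of order
`n ≥ 3` with hole parameters `t₀`, `t_x`, `t_y`, the number of quadrangles at
the hole satisfying (C1), (C2) and (C3) is at least
`(n - 1) * (n - 3) - t₀ - (t_x + t_y) * (n - 2)`. -/
theorem card_C123_quadrangles_ge {n : ℕ} (hn : 3 ≤ n)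
    {G : Type*} [Group G] [Fintype G] [DecidableEq G] (hcard : Fintype.card G = n)
    (g h : Fin n → G) (hg : Function.Bijective g) (hh : Function.Bijective h)
    (m : Fin n → Fin n → G) (hm : ∀ i j, m i j = g i * h j)
    (T : Finset (Fin n × Fin n))
    (i₂ j₂ : Fin n) (hd : (i₂, j₂) ∈ T) :
    (n - 1) * (n - 3)
        - (T.filter (fun c => c.1 ≠ i₂ ∧ c.2 ≠ j₂)).card
        - ((Finset.univ.filter (fun i : Fin n => i ≠ i₂ ∧ (i, j₂) ∈ T)).card +
           (Finset.univ.filter (fun j : Fin n => j ≠ j₂ ∧ (i₂, j) ∈ T)).card) * (n - 2)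
      ≤ (Finset.univ.filter (fun p : Fin n × Fin n =>
          p.1 ≠ i₂ ∧ p.2 ≠ j₂ ∧
          (p.1, p.2) ∉ T ∧ (i₂, p.2) ∉ T ∧ (p.1, j₂) ∉ T ∧
          m i₂ p.2 ≠ m p.1 j₂ ∧ m p.1 p.2 ≠ m i₂ j₂)).card :=
  card_C123_quadrangles_ge_general g h hg hh m hm T i₂ j₂
end

section
/- Let n > 3, let G be a finite group with Fintype.card G = n, let m i j = g i * h j be a Cayley matrix of order n, and let T be a finite set of cells with |T| ≤ n - 1. Fix a hole (i₂, j₂) ∈ T and suppose every hole of T other than (i₂, j₂) lies in row i₂ or in column j₂ (i.e., t₀ = 0), and that the number t_y of holes (i₂, j) ∈ T with j ≠ j₂ satisfies t_y < n - 3. Then there exist i₁ ≠ i₂ and j₁ ≠ j₂ such that the cells (i₁, j₁), (i₂, j₁), (i₁, j₂) are not in T, m i₂ j₁ ≠ m i₁ j₂, and m i₁ j₁ ≠ m i₂ j₂. -/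
/-- If, for a hole `(i₂, j₂)` of a partial Cayley matrix of order `n > 3` with
at most `n - 1` holes, all other holes lie in row `i₂` or column `j₂`
(i.e. `t₀ = 0`) and the number `t_y` of holes in row `i₂` satisfies
`t_y < n - 3`, then there is a quadrangle at the hole satisfying (C1), (C2)
and (C3). -/
theorem exists_quadrangle_of_t0_zero_ty_small {n : ℕ} (hn : 3 < n)
    {G : Type*} [Group G] [Fintype G] (hcard : Fintype.card G = n)
    (g h : Fin n → G) (hg : Function.Bijective g) (hh : Function.Bijective h)
    (m : Fin n → Fin n → G) (hm : ∀ i j, m i j = g i * h j)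
    (T : Finset (Fin n × Fin n)) (hT : T.card ≤ n - 1)
    (i₂ j₂ : Fin n) (hd : (i₂, j₂) ∈ T)
    (ht0 : ∀ i j : Fin n, (i, j) ∈ T → (i, j) ≠ (i₂, j₂) → i = i₂ ∨ j = j₂)
    (hty : (Finset.univ.filter (fun j : Fin n => j ≠ j₂ ∧ (i₂, j) ∈ T)).card < n - 3) :
    ∃ i₁ j₁ : Fin n, i₁ ≠ i₂ ∧ j₁ ≠ j₂ ∧
      (i₁, j₁) ∉ T ∧ (i₂, j₁) ∉ T ∧ (i₁, j₂) ∉ T ∧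
      m i₂ j₁ ≠ m i₁ j₂ ∧ m i₁ j₁ ≠ m i₂ j₂ := by
  classical
  set A : Finset (Fin n) := Finset.univ.filter (fun j => j ≠ j₂ ∧ (i₂, j) ∉ T) with hA
  set B : Finset (Fin n) := Finset.univ.filter (fun i => i ≠ i₂ ∧ (i, j₂) ∉ T) with hB
  -- |A| ≥ 3
  have hAcard : 3 ≤ A.card := by
    have hsplit := Finset.card_filter_add_card_filter_not
      (s := (Finset.univ : Finset (Fin n)))
      (p := fun j => j ≠ j₂ ∧ (i₂, j) ∉ T)
    have hsub : Finset.univ.filter (fun j : Fin n => ¬(j ≠ j₂ ∧ (i₂, j) ∉ T)) ⊆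
        insert j₂ (Finset.univ.filter (fun j : Fin n => j ≠ j₂ ∧ (i₂, j) ∈ T)) := by
      intro j hj
      simp only [Finset.mem_filter, Finset.mem_univ, true_and, not_and, not_not] at hj
      by_cases hjj : j = j₂
      · simp [hjj]
      · simp [Finset.mem_insert, Finset.mem_filter, hjj, hj hjj]
    have h1 := Finset.card_le_card hsub
    have h2 := Finset.card_insert_le j₂
      (Finset.univ.filter (fun j : Fin n => j ≠ j₂ ∧ (i₂, j) ∈ T))
    simp only [Finset.card_univ, Fintype.card_fin] at hsplit
    rw [← hA] at hsplit
    omega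
  -- |B| ≥ 1
  have hBcard : 1 ≤ B.card := by
    have hsplit := Finset.card_filter_add_card_filter_not
      (s := (Finset.univ : Finset (Fin n)))
      (p := fun i => i ≠ i₂ ∧ (i, j₂) ∉ T)
    set C : Finset (Fin n) := Finset.univ.filter (fun i : Fin n => i ≠ i₂ ∧ (i, j₂) ∈ T) with hC
    have hsub : Finset.univ.filter (fun i : Fin n => ¬(i ≠ i₂ ∧ (i, j₂) ∉ T)) ⊆
        insert i₂ C := by
      intro i hi
      simp only [Finset.mem_filter, Finset.mem_univ, true_and, not_and, not_not] at hi
      by_cases hii : i = i₂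
      · simp [hii]
      · simp [Finset.mem_insert, hC, Finset.mem_filter, hii, hi hii]
    have h1 := Finset.card_le_card hsub
    have h2 : (insert i₂ C).card ≤ n - 1 := by
      have hmap : (insert i₂ C).card ≤ T.card := by
        apply Finset.card_le_card_of_injOn (fun i => (i, j₂))
        · intro i hi
          rcases Finset.mem_insert.mp hi with rfl | hi
          · exact hd
          · exact (Finset.mem_filter.mp hi).2.2
        · intro a _ b _ hab
          exact (Prod.mk.injEq _ _ _ _ ▸ hab).1
      omega
    simp only [Finset.card_univ, Fintype.card_fin] at hsplit
    rw [← hB] at hsplit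
    omega
  -- bad pairs
  set S : Finset (Fin n × Fin n) := A ×ˢ B with hS
  set bad1 : Finset (Fin n × Fin n) := S.filter (fun p => m i₂ p.1 = m p.2 j₂) with hb1
  set bad2 : Finset (Fin n × Fin n) := S.filter (fun p => m p.2 p.1 = m i₂ j₂) with hb2
  have hinj : ∀ (p q : Fin n × Fin n), p.2 = q.2 → m i₂ p.1 = m p.2 j₂ →
      m i₂ q.1 = m q.2 j₂ → p = q := by
    intro p q h2 hp hq
    have : m i₂ p.1 = m i₂ q.1 := by rw [hp, hq, h2]
    rw [hm, hm] at this
    have := hh.1 (mul_left_cancel this)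
    exact Prod.ext this h2
  have hbad1 : bad1.card ≤ B.card := by
    apply Finset.card_le_card_of_injOn Prod.snd
    · intro p hp
      simp only [hb1, Finset.mem_coe, Finset.mem_filter, hS, Finset.mem_product] at hp
      exact hp.1.2
    · intro p hp q hq h2
      simp only [hb1, Finset.mem_filter, Finset.mem_coe] at hp hq
      exact hinj p q h2 hp.2 hq.2
  have hbad2 : bad2.card ≤ B.card := by
    apply Finset.card_le_card_of_injOn Prod.snd
    · intro p hp
      simp only [hb2, Finset.mem_coe, Finset.mem_filter, hS, Finset.mem_product] at hp
      exact hp.1.2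
    · intro p hp q hq h2
      simp only [hb2, Finset.mem_filter, Finset.mem_coe] at hp hq
      have : m p.2 p.1 = m p.2 q.1 := by rw [hp.2, ← hq.2, h2]
      rw [hm, hm] at this
      exact Prod.ext (hh.1 (mul_left_cancel this)) h2
  have hScard : S.card = A.card * B.card := Finset.card_product A B
  have hlt : (bad1 ∪ bad2).card < S.card := by
    have := Finset.card_union_le bad1 bad2
    have h3 : 3 * B.card ≤ A.card * B.card := Nat.mul_le_mul_right _ hAcard
    omega
  have hex : ∃ p ∈ S, p ∉ bad1 ∪ bad2 := by
    by_contra hcon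
    push_neg at hcon
    have : S ⊆ bad1 ∪ bad2 := fun p hp => hcon p hp
    exact absurd (Finset.card_le_card this) (by omega)
  obtain ⟨⟨j₁, i₁⟩, hpS, hpbad⟩ := hex
  simp only [hS, Finset.mem_product] at hpS
  obtain ⟨hj₁A, hi₁B⟩ := hpS
  simp only [hA, Finset.mem_filter, Finset.mem_univ, true_and] at hj₁A
  simp only [hB, Finset.mem_filter, Finset.mem_univ, true_and] at hi₁B
  simp only [Finset.mem_union, hb1, hb2, Finset.mem_filter, not_or, not_and] at hpbad
  refine ⟨i₁, j₁, hi₁B.1, hj₁A.1, ?_, hj₁A.2, hi₁B.2, ?_, ?_⟩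
  · intro hmem
    rcases ht0 i₁ j₁ hmem (by simp [Prod.ext_iff, hi₁B.1]) with h1 | h2
    · exact hi₁B.1 h1
    · exact hj₁A.1 h2
  · intro heq
    exact hpbad.1 (Finset.mem_product.mpr ⟨by simpa [hA] using hj₁A, by simpa [hB] using hi₁B⟩) heq
  · intro heq
    exact hpbad.2 (Finset.mem_product.mpr ⟨by simpa [hA] using hj₁A, by simpa [hB] using hi₁B⟩) heq
end

section
/- Let n ≥ 2, let G be a finite group with Fintype.card G = n, let g, h : Fin n → G be bijections, and let m i j = g i * h j be a Cayley matrix of order n. Fix a row i₀ : Fin n and let T = {(i₀, j) : j ∈ Fin n} be the set of all n cells of row i₀. Then there exists a matrix N : Fin n → Fin n → G with N ≠ m such that N satisfies the quadrangle criterion and N i j = m i j for every (i, j) ∉ T. (Hence a Cayley matrix with one whole row deleted cannot be reconstructed by the quadrangle criterion, so the bound n - 1 on the number of holes cannot be improved to n.) -/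
/-- A Cayley matrix with one whole row deleted cannot be reconstructed by the
quadrangle criterion: there is a different completion still satisfying the
quadrangle criterion. Hence the bound `n - 1` on the number of holes cannot be
improved to `n`. -/
theorem row_deleted_not_reconstructable {n : ℕ} (hn : 2 ≤ n)
    {G : Type*} [Group G] [Fintype G] (hcard : Fintype.card G = n)
    (g h : Fin n → G) (hg : Function.Bijective g) (hh : Function.Bijective h)
    (m : Fin n → Fin n → G) (hm : ∀ i j, m i j = g i * h j)
    (i₀ : Fin n) (T : Set (Fin n × Fin n)) (hT : T = {c | c.1 = i₀}) :
    ∃ N : Fin n → Fin n → G, N ≠ m ∧ QuadrangleCriterion N ∧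
      ∀ i j, (i, j) ∉ T → N i j = m i j := by
  have : Nontrivial G := Fintype.one_lt_card_iff_nontrivial.mp (by omega)
  obtain ⟨x, hx⟩ := exists_ne (1 : G)
  classical
  set a : Fin n → G := fun i => if i = i₀ then g i₀ * x else g i with ha
  refine ⟨fun i j => a i * h j, ?_, ?_, ?_⟩
  · intro hN
    have := congrFun (congrFun hN i₀) i₀
    simp only [ha, if_pos rfl, hm] at this
    exact hx (mul_eq_left.mp (mul_right_cancel this))
  · intro i₁ i₂ j₁ j₂ i₁' i₂' j₁' j₂' _ _ _ _ e1 e2 e3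
    dsimp only at e1 e2 e3 ⊢
    have hb : (h j₁)⁻¹ * h j₂ = (h j₁')⁻¹ * h j₂' := by
      have h1 : (h j₁)⁻¹ * h j₂ = (a i₁ * h j₁)⁻¹ * (a i₁ * h j₂) := by group
      rw [h1, e1, e3]; group
    calc a i₂ * h j₂ = a i₂ * h j₁ * ((h j₁)⁻¹ * h j₂) := by group
      _ = a i₂' * h j₁' * ((h j₁')⁻¹ * h j₂') := by rw [e2, hb]
      _ = a i₂' * h j₂' := by group
  · intro i j hij
    rw [hT] at hij
    simp only [Set.mem_setOf_eq] at hij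
    rw [hm, ha]
    simp [hij]
end
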